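/- arXiv:1710.07211 — 3 statements merged into one kernel-verified Lean document; each statement's English description precedes it below -/
import Mathlib

section
/- Let a > 0 and let x < 0 be real. Set R_n = \pi n / a for positive integers n. Then the integral of tanh(a\omega) e^{-i\omega x}/\omega over the large upper semicircular arc of radius R_n, namely J_n = \int_0^{\pi} tanh(a R_n e^{i\theta}) \exp(-i R_n e^{i\theta} x) \, i \, d\theta, tends to 0 as n \to \infty. -/
open Complex Filter intervalIntegral

private lemma sq_le_sinh_sq (t : ℝ) : t ^ 2 ≤ Real.sinh t ^ 2 := by
  have h : ∀ y : ℝ, 0 ≤ y → y ^ 2 ≤ Real.sinh y ^ 2 := by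
    intro y hy
    rcases eq_or_lt_of_le hy with rfl | hy'
    · simp
    · exact pow_le_pow_left₀ hy (Real.self_lt_sinh_iff.mpr hy').le 2
  rcases le_or_gt 0 t with ht | ht
  · exact h t ht
  · have := h (-t) (by linarith)
    simpa [Real.sinh_neg] using this

private lemma normSq_cosh_eq (u v : ℝ) :
    Complex.normSq (Complex.cosh ((u : ℂ) + (v : ℂ) * Complex.I)) =
      Real.sinh u ^ 2 + Real.cos v ^ 2 := by
  rw [Complex.cosh_add, Complex.cosh_mul_I, Complex.sinh_mul_I, ← Complex.ofReal_cosh,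
    ← Complex.ofReal_sinh, ← Complex.ofReal_cos, ← Complex.ofReal_sin,
    show (Real.cosh u : ℂ) * (Real.cos v : ℂ) + (Real.sinh u : ℂ) * ((Real.sin v : ℂ) * Complex.I)
      = ((Real.cosh u * Real.cos v : ℝ) : ℂ) + ((Real.sinh u * Real.sin v : ℝ) : ℂ) * Complex.I
      from by push_cast; ring,
    Complex.normSq_add_mul_I]
  nlinarith [Real.cosh_sq u, Real.sin_sq_add_cos_sq v]

private lemma normSq_sinh_eq (u v : ℝ) :
    Complex.normSq (Complex.sinh ((u : ℂ) + (v : ℂ) * Complex.I)) =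
      Real.sinh u ^ 2 + Real.sin v ^ 2 := by
  rw [Complex.sinh_add, Complex.cosh_mul_I, Complex.sinh_mul_I, ← Complex.ofReal_cosh,
    ← Complex.ofReal_sinh, ← Complex.ofReal_cos, ← Complex.ofReal_sin,
    show (Real.sinh u : ℂ) * (Real.cos v : ℂ) + (Real.cosh u : ℂ) * ((Real.sin v : ℂ) * Complex.I)
      = ((Real.sinh u * Real.cos v : ℝ) : ℂ) + ((Real.cosh u * Real.sin v : ℝ) : ℂ) * Complex.I
      from by push_cast; ring,
    Complex.normSq_add_mul_I]
  nlinarith [Real.cosh_sq u, Real.sin_sq_add_cos_sq v]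

private lemma lip_cos (u v : ℝ) : |Real.cos u - Real.cos v| ≤ |u - v| := by
  rw [Real.cos_sub_cos, abs_mul, abs_mul]
  have h1 : |Real.sin ((u + v) / 2)| ≤ 1 :=
    abs_le.2 ⟨Real.neg_one_le_sin _, Real.sin_le_one _⟩
  have h2 : |Real.sin ((u - v) / 2)| ≤ |(u - v) / 2| := Real.abs_sin_le_abs
  have h3 : |(u - v) / 2| = |u - v| / 2 := by rw [abs_div]; norm_num
  have h4 : |(-2 : ℝ)| = 2 := by norm_num
  rw [h4]
  nlinarith [abs_nonneg (Real.sin ((u - v) / 2)), abs_nonneg (Real.sin ((u + v) / 2)),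
    abs_nonneg (u - v)]

private lemma denom_lb (n : ℕ) (θ : ℝ) (h0 : 0 ≤ θ) (hπ : θ ≤ Real.pi) :
    (1 / 4 : ℝ) ≤ Real.sinh (Real.pi * n * Real.cos θ) ^ 2
      + Real.cos (Real.pi * n * Real.sin θ) ^ 2 := by
  set p : ℝ := Real.pi * n with hp
  have hp0 : 0 ≤ p := by positivity
  have hs0 : 0 ≤ Real.sin θ := Real.sin_nonneg_of_nonneg_of_le_pi h0 hπ
  have hs1 : Real.sin θ ≤ 1 := Real.sin_le_one θ
  rcases le_or_gt (p * Real.cos θ ^ 2) (1 / 2) with hA | hB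
  · have h1 : |p * Real.sin θ - p| ≤ 1 / 2 := by
      rw [abs_of_nonpos (by nlinarith)]
      nlinarith [Real.sin_sq_add_cos_sq θ]
    have hcp : |Real.cos p| = 1 := by
      have : p = (n : ℤ) * Real.pi := by push_cast [hp]; ring
      rw [this]
      exact Real.abs_cos_int_mul_pi n
    have h2 : (1 / 2 : ℝ) ≤ |Real.cos (p * Real.sin θ)| := by
      have := lip_cos (p * Real.sin θ) p
      have habs : |Real.cos p| - |Real.cos (p * Real.sin θ)| ≤ |Real.cos (p * Real.sin θ) - Real.cos p| := by
        have := abs_sub_abs_le_abs_sub (Real.cos p) (Real.cos (p * Real.sin θ))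
        rw [abs_sub_comm] at this
        linarith
      linarith
    nlinarith [sq_nonneg (Real.sinh (p * Real.cos θ)), _root_.sq_abs (Real.cos (p * Real.sin θ))]
  · have hpos : 0 < p := by nlinarith [sq_nonneg (Real.cos θ)]
    have hc1 : Real.cos θ ^ 2 ≤ 1 := Real.cos_sq_le_one θ
    have : (1 / 4 : ℝ) < (p * Real.cos θ) ^ 2 := by nlinarith
    nlinarith [sq_le_sinh_sq (p * Real.cos θ), sq_nonneg (Real.cos (p * Real.sin θ))]

private lemma arc_point_eq (n : ℕ) (θ : ℝ) :
    ((Real.pi * n : ℝ) : ℂ) * Complex.exp (Complex.I * θ) =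
      ((Real.pi * n * Real.cos θ : ℝ) : ℂ) + ((Real.pi * n * Real.sin θ : ℝ) : ℂ) * Complex.I := by
  rw [mul_comm Complex.I (θ : ℂ), Complex.exp_mul_I, ← Complex.ofReal_cos, ← Complex.ofReal_sin]
  push_cast
  ring

private lemma tanh_norm_le (n : ℕ) (θ : ℝ) (h0 : 0 ≤ θ) (hπ : θ ≤ Real.pi) :
    ‖Complex.tanh (((Real.pi * n : ℝ) : ℂ) * Complex.exp (Complex.I * θ))‖ ≤ 3 := by
  rw [arc_point_eq]
  set u : ℝ := Real.pi * n * Real.cos θ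
  set v : ℝ := Real.pi * n * Real.sin θ
  set z : ℂ := ((u : ℝ) : ℂ) + ((v : ℝ) : ℂ) * Complex.I with hz
  have hD : (1 / 4 : ℝ) ≤ Real.sinh u ^ 2 + Real.cos v ^ 2 := denom_lb n θ h0 hπ
  have hcosh : Complex.normSq (Complex.cosh z) = Real.sinh u ^ 2 + Real.cos v ^ 2 :=
    normSq_cosh_eq u v
  have hsinh : Complex.normSq (Complex.sinh z) = Real.sinh u ^ 2 + Real.sin v ^ 2 :=
    normSq_sinh_eq u v
  have hcosh_ne : Complex.cosh z ≠ 0 := by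
    intro h
    rw [h] at hcosh
    simp at hcosh
    nlinarith
  have h9 : Complex.normSq (Complex.tanh z) ≤ 9 := by
    rw [Complex.tanh_eq_sinh_div_cosh, map_div₀, hcosh, hsinh]
    rw [div_le_iff₀ (by nlinarith)]
    nlinarith [Real.sin_sq_add_cos_sq v]
  have habs : ‖Complex.tanh z‖ ^ 2 ≤ 9 := by
    rw [Complex.sq_norm]; exact h9
  nlinarith [norm_nonneg (Complex.tanh z)]

private lemma norm_F_le (a x : ℝ) (ha : 0 < a) (n : ℕ) (θ : ℝ)
    (h0 : 0 ≤ θ) (hπ : θ ≤ Real.pi) :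
    ‖Complex.tanh ((a : ℂ) * ((Real.pi * n / a : ℝ) * Complex.exp (Complex.I * θ))) *
        Complex.exp (-Complex.I * ((Real.pi * n / a : ℝ) * Complex.exp (Complex.I * θ)) *
          (x : ℂ)) * Complex.I‖ ≤ 3 * Real.exp (Real.pi * n / a * x * Real.sin θ) := by
  have ha' : (a : ℂ) ≠ 0 := Complex.ofReal_ne_zero.mpr ha.ne'
  have harg : (a : ℂ) * (((Real.pi * n / a : ℝ) : ℂ) * Complex.exp (Complex.I * θ)) =
      ((Real.pi * n : ℝ) : ℂ) * Complex.exp (Complex.I * θ) := by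
    push_cast
    field_simp
  have hre : (-Complex.I * (((Real.pi * n / a : ℝ) : ℂ) * Complex.exp (Complex.I * θ)) *
      (x : ℂ)).re = Real.pi * n / a * x * Real.sin θ := by
    rw [show -Complex.I * (((Real.pi * n / a : ℝ) : ℂ) * Complex.exp (Complex.I * θ)) * (x : ℂ)
        = ((Real.pi * n / a * x * Real.sin θ : ℝ) : ℂ)
          + ((-(Real.pi * n / a * x * Real.cos θ) : ℝ) : ℂ) * Complex.I from by
      rw [mul_comm Complex.I (θ : ℂ), Complex.exp_mul_I, ← Complex.ofReal_cos,
        ← Complex.ofReal_sin]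
      push_cast
      ring_nf
      rw [Complex.I_sq]
      ring]
    simp only [Complex.add_re, Complex.ofReal_re, Complex.mul_re, Complex.I_re, Complex.I_im,
      Complex.ofReal_im]
    ring
  rw [norm_mul, norm_mul, harg, Complex.norm_exp, hre]
  have h1 := tanh_norm_le n θ h0 hπ
  have h2 := Real.exp_pos (Real.pi * n / a * x * Real.sin θ)
  simp only [Complex.norm_I, mul_one]
  nlinarith

/-- For `a > 0` and real `x < 0`, with `Rₙ = πn/a`, the integral of
`tanh(aω)e^{-iωx}/ω` over the large upper semicircular arc of radius `Rₙ`,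
`Jₙ = ∫_0^π tanh(a Rₙ e^{iθ}) exp(-i Rₙ e^{iθ} x) i dθ`, tends to `0` as `n → ∞`. -/
theorem large_arc_integral_tendsto_zero (a x : ℝ) (ha : 0 < a) (hx : x < 0) :
    Tendsto
      (fun n : ℕ => ∫ θ in (0 : ℝ)..Real.pi,
        Complex.tanh ((a : ℂ) * ((Real.pi * n / a : ℝ) * Complex.exp (Complex.I * θ))) *
          Complex.exp (-Complex.I * ((Real.pi * n / a : ℝ) * Complex.exp (Complex.I * θ)) *
            (x : ℂ)) * Complex.I)
      atTop (nhds 0) := by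
  have hIoc : Set.uIoc (0 : ℝ) Real.pi = Set.Ioc 0 Real.pi := Set.uIoc_of_le Real.pi_pos.le
  have mtanh : Measurable Complex.tanh := by
    have : Complex.tanh = fun z => Complex.sinh z / Complex.cosh z :=
      funext fun z => Complex.tanh_eq_sinh_div_cosh z
    rw [this]
    exact Complex.continuous_sinh.measurable.div Complex.continuous_cosh.measurable
  have cE : Continuous fun θ : ℝ => Complex.exp (Complex.I * θ) :=
    Complex.continuous_exp.comp (continuous_const.mul Complex.continuous_ofReal)
  have key := intervalIntegral.tendsto_integral_filter_of_dominated_convergence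
    (μ := MeasureTheory.volume) (l := (atTop : Filter ℕ)) (a := (0 : ℝ)) (b := Real.pi) (f := fun _ : ℝ => (0 : ℂ))
    (F := fun (n : ℕ) (θ : ℝ) =>
      Complex.tanh ((a : ℂ) * ((Real.pi * n / a : ℝ) * Complex.exp (Complex.I * θ))) *
        Complex.exp (-Complex.I * ((Real.pi * n / a : ℝ) * Complex.exp (Complex.I * θ)) *
          (x : ℂ)) * Complex.I)
    (bound := fun _ => (3 : ℝ))
    (Eventually.of_forall fun n => by
      refine Measurable.aestronglyMeasurable ?_
      refine (Measurable.mul ?_ measurable_const)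
      refine Measurable.mul ?_ ?_
      · exact mtanh.comp (continuous_const.mul (continuous_const.mul cE)).measurable
      · exact (Complex.continuous_exp.comp
          (((continuous_const.mul (continuous_const.mul cE)).mul continuous_const))).measurable)
    (Eventually.of_forall fun n => MeasureTheory.ae_of_all _ fun θ hθ => by
      rw [hIoc] at hθ
      refine (norm_F_le a x ha n θ hθ.1.le hθ.2).trans ?_
      have hR : 0 ≤ Real.pi * n / a := by positivity
      have hs : 0 ≤ Real.sin θ := Real.sin_nonneg_of_nonneg_of_le_pi hθ.1.le hθ.2
      have : Real.pi * n / a * x * Real.sin θ ≤ 0 := by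
        nlinarith [mul_nonneg (mul_nonneg hR hs) (le_of_lt (neg_pos.mpr hx))]
      nlinarith [Real.exp_le_one_iff.mpr this])
    intervalIntegrable_const
    ?_
  · rwa [intervalIntegral.integral_zero] at key
  · have hne : ∀ᵐ θ : ℝ, θ ≠ Real.pi := by
      have hset : {θ : ℝ | ¬ θ ≠ Real.pi} = {Real.pi} := by ext t; simp
      rw [MeasureTheory.ae_iff, hset]
      exact Real.volume_singleton
    filter_upwards [hne] with θ hθne hθmem
    rw [hIoc] at hθmem
    have hθπ : θ < Real.pi := lt_of_le_of_ne hθmem.2 hθne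
    have hsin : 0 < Real.sin θ := Real.sin_pos_of_pos_of_lt_pi hθmem.1 hθπ
    set c : ℝ := Real.pi / a * x * Real.sin θ with hc_def
    have hpa : 0 < Real.pi / a := div_pos Real.pi_pos ha
    have hc : c < 0 := by nlinarith [mul_pos (mul_pos hpa (neg_pos.mpr hx)) hsin]
    refine squeeze_zero_norm (a := fun n : ℕ => 3 * Real.exp c ^ n) ?_ ?_
    · intro n
      have h := norm_F_le a x ha n θ hθmem.1.le hθmem.2
      have hexpeq : Real.exp (Real.pi * n / a * x * Real.sin θ) = Real.exp c ^ n := by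
        rw [← Real.exp_nat_mul]
        congr 1
        rw [hc_def]
        ring
      rwa [hexpeq] at h
    · have h1 : Tendsto (fun n : ℕ => Real.exp c ^ n) atTop (nhds 0) :=
        tendsto_pow_atTop_nhds_zero_of_lt_one (Real.exp_pos c).le (Real.exp_lt_one_iff.mpr hc)
      simpa using h1.const_mul (3 : ℝ)
end

section
/- Let a > 0, let x < 0 be real, let n \geq 1 be an integer, and set \rho_n = \pi/((n+2)a) and R_n = \pi n/a. Write g(\omega) = tanh(a\omega) e^{-i\omega x}/\omega. Then the closed-contour integral of g over the boundary of the upper half-annulus \{\rho_n \leq |\omega| \leq R_n, Im\,\omega \geq 0\}, namely \int_{-R_n}^{-\rho_n} g(\omega)\, d\omega + \int_{\rho_n}^{R_n} g(\omega) \, d\omega - \int_0^{\pi} g(\rho_n e^{i\theta}) \, i\rho_n e^{i\theta} \, d\theta + \int_0^{\pi} g(R_n e^{i\theta}) \, i R_n e^{i\theta} \, d\theta, equals 4 \sum_{k=0}^{n-1} e^{(2k+1)\pi x/(2a)}/(2k+1). -/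
open Complex Filter intervalIntegral Set MeasureTheory Topology

/-- The integrand `g(ω) = tanh(aω) e^{-iωx} / ω`. -/
noncomputable def tanhKernel (a x : ℝ) (ω : ℂ) : ℂ :=
  Complex.tanh ((a : ℂ) * ω) * Complex.exp (-Complex.I * ω * (x : ℂ)) / ω

noncomputable def tanhF (a x : ℝ) (z : ℂ) : ℂ :=
  Complex.tanh ((a : ℂ) * Complex.exp z) * Complex.exp (-I * Complex.exp z * (x : ℂ))



noncomputable def RectInt (f : ℂ → ℂ) (x₁ x₂ y₁ y₂ : ℝ) : ℂ :=
  ((∫ t : ℝ in x₁..x₂, f (t + y₁ * I)) - ∫ t : ℝ in x₁..x₂, f (t + y₂ * I))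
    + (I • ∫ t : ℝ in y₁..y₂, f (x₂ + t * I)) - I • ∫ t : ℝ in y₁..y₂, f (x₁ + t * I)

lemma RectInt_eq_zero {f : ℂ → ℂ} {x₁ x₂ y₁ y₂ : ℝ} (hx : x₁ ≤ x₂) (hy : y₁ ≤ y₂)
    (s : Set ℂ) (hs : s.Countable)
    (Hc : ContinuousOn f (Icc x₁ x₂ ×ℂ Icc y₁ y₂))
    (Hd : ∀ z ∈ (Ioo x₁ x₂ ×ℂ Ioo y₁ y₂) \ s, DifferentiableAt ℂ f z) :
    RectInt f x₁ x₂ y₁ y₂ = 0 := by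
  have := Complex.integral_boundary_rect_eq_zero_of_differentiable_on_off_countable f
    (x₁ + y₁ * I) (x₂ + y₂ * I) s hs ?_ ?_
  · simpa [RectInt] using this
  · simpa [uIcc_of_le hx, uIcc_of_le hy] using Hc
  · simpa [min_eq_left hx, max_eq_right hx, min_eq_left hy, max_eq_right hy] using Hd

lemma RectInt_hsplit {f : ℂ → ℂ} {x₁ xm x₂ y₁ y₂ : ℝ}
    (h1 : IntervalIntegrable (fun t : ℝ => f (t + y₁ * I)) volume x₁ xm)
    (h2 : IntervalIntegrable (fun t : ℝ => f (t + y₁ * I)) volume xm x₂)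
    (h3 : IntervalIntegrable (fun t : ℝ => f (t + y₂ * I)) volume x₁ xm)
    (h4 : IntervalIntegrable (fun t : ℝ => f (t + y₂ * I)) volume xm x₂) :
    RectInt f x₁ x₂ y₁ y₂ = RectInt f x₁ xm y₁ y₂ + RectInt f xm x₂ y₁ y₂ := by
  unfold RectInt
  rw [← integral_add_adjacent_intervals h1 h2, ← integral_add_adjacent_intervals h3 h4]
  simp only [smul_eq_mul]; ring

lemma RectInt_vsplit {f : ℂ → ℂ} {x₁ x₂ y₁ ym y₂ : ℝ}
    (h1 : IntervalIntegrable (fun t : ℝ => f (x₁ + t * I)) volume y₁ ym)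
    (h2 : IntervalIntegrable (fun t : ℝ => f (x₁ + t * I)) volume ym y₂)
    (h3 : IntervalIntegrable (fun t : ℝ => f (x₂ + t * I)) volume y₁ ym)
    (h4 : IntervalIntegrable (fun t : ℝ => f (x₂ + t * I)) volume ym y₂) :
    RectInt f x₁ x₂ y₁ y₂ = RectInt f x₁ x₂ y₁ ym + RectInt f x₁ x₂ ym y₂ := by
  unfold RectInt
  rw [← integral_add_adjacent_intervals h1 h2, ← integral_add_adjacent_intervals h3 h4]
  simp only [smul_eq_mul]; ring

lemma RectInt_add {f g : ℂ → ℂ} {x₁ x₂ y₁ y₂ : ℝ}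
    (hf1 : IntervalIntegrable (fun t : ℝ => f (t + y₁ * I)) volume x₁ x₂)
    (hf2 : IntervalIntegrable (fun t : ℝ => f (t + y₂ * I)) volume x₁ x₂)
    (hf3 : IntervalIntegrable (fun t : ℝ => f (x₂ + t * I)) volume y₁ y₂)
    (hf4 : IntervalIntegrable (fun t : ℝ => f (x₁ + t * I)) volume y₁ y₂)
    (hg1 : IntervalIntegrable (fun t : ℝ => g (t + y₁ * I)) volume x₁ x₂)
    (hg2 : IntervalIntegrable (fun t : ℝ => g (t + y₂ * I)) volume x₁ x₂)
    (hg3 : IntervalIntegrable (fun t : ℝ => g (x₂ + t * I)) volume y₁ y₂)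
    (hg4 : IntervalIntegrable (fun t : ℝ => g (x₁ + t * I)) volume y₁ y₂) :
    RectInt (fun z => f z + g z) x₁ x₂ y₁ y₂ = RectInt f x₁ x₂ y₁ y₂ + RectInt g x₁ x₂ y₁ y₂ := by
  unfold RectInt
  rw [integral_add hf1 hg1, integral_add hf2 hg2, integral_add hf3 hg3, integral_add hf4 hg4]
  simp only [smul_eq_mul]; ring

lemma RectInt_const_mul (r : ℂ) (g : ℂ → ℂ) (x₁ x₂ y₁ y₂ : ℝ) :
    RectInt (fun z => r * g z) x₁ x₂ y₁ y₂ = r * RectInt g x₁ x₂ y₁ y₂ := by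
  unfold RectInt
  rw [intervalIntegral.integral_const_mul, intervalIntegral.integral_const_mul,
    intervalIntegral.integral_const_mul, intervalIntegral.integral_const_mul]
  simp only [smul_eq_mul]; ring

lemma RectInt_norm_le {g : ℂ → ℂ} {x₁ x₂ y₁ y₂ C : ℝ} (hx : x₁ ≤ x₂) (hy : y₁ ≤ y₂)
    (hb1 : ∀ t ∈ Set.uIoc x₁ x₂, ‖g (t + y₁ * I)‖ ≤ C)
    (hb2 : ∀ t ∈ Set.uIoc x₁ x₂, ‖g (t + y₂ * I)‖ ≤ C)
    (hb3 : ∀ t ∈ Set.uIoc y₁ y₂, ‖g (x₂ + t * I)‖ ≤ C)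
    (hb4 : ∀ t ∈ Set.uIoc y₁ y₂, ‖g (x₁ + t * I)‖ ≤ C) :
    ‖RectInt g x₁ x₂ y₁ y₂‖ ≤ 2 * C * (x₂ - x₁) + 2 * C * (y₂ - y₁) := by
  have n1 := intervalIntegral.norm_integral_le_of_norm_le_const hb1
  have n2 := intervalIntegral.norm_integral_le_of_norm_le_const hb2
  have n3 := intervalIntegral.norm_integral_le_of_norm_le_const hb3
  have n4 := intervalIntegral.norm_integral_le_of_norm_le_const hb4
  rw [_root_.abs_of_nonneg (by linarith : (0:ℝ) ≤ x₂ - x₁)] at n1 n2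
  rw [_root_.abs_of_nonneg (by linarith : (0:ℝ) ≤ y₂ - y₁)] at n3 n4
  unfold RectInt
  calc ‖((∫ t : ℝ in x₁..x₂, g (t + y₁ * I)) - ∫ t : ℝ in x₁..x₂, g (t + y₂ * I))
        + (I • ∫ t : ℝ in y₁..y₂, g (x₂ + t * I)) - I • ∫ t : ℝ in y₁..y₂, g (x₁ + t * I)‖
      ≤ ‖((∫ t : ℝ in x₁..x₂, g (t + y₁ * I)) - ∫ t : ℝ in x₁..x₂, g (t + y₂ * I))
        + (I • ∫ t : ℝ in y₁..y₂, g (x₂ + t * I))‖ + ‖I • ∫ t : ℝ in y₁..y₂, g (x₁ + t * I)‖ :=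
        norm_sub_le _ _
    _ ≤ ‖(∫ t : ℝ in x₁..x₂, g (t + y₁ * I)) - ∫ t : ℝ in x₁..x₂, g (t + y₂ * I)‖
        + ‖I • ∫ t : ℝ in y₁..y₂, g (x₂ + t * I)‖
        + ‖I • ∫ t : ℝ in y₁..y₂, g (x₁ + t * I)‖ := by
        gcongr; exact norm_add_le _ _
    _ ≤ ‖∫ t : ℝ in x₁..x₂, g (t + y₁ * I)‖ + ‖∫ t : ℝ in x₁..x₂, g (t + y₂ * I)‖
        + ‖I • ∫ t : ℝ in y₁..y₂, g (x₂ + t * I)‖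
        + ‖I • ∫ t : ℝ in y₁..y₂, g (x₁ + t * I)‖ := by
        gcongr; exact norm_sub_le _ _
    _ ≤ 2 * C * (x₂ - x₁) + 2 * C * (y₂ - y₁) := by
        simp only [norm_smul, Complex.norm_I, one_mul]
        linarith

-- antiderivative of (t + yI - c)⁻¹ along a horizontal line avoiding c's height
lemma integral_inv_horiz (c : ℂ) {y : ℝ} (h : y ≠ c.im) (x₁ x₂ : ℝ) :
    ∫ t : ℝ in x₁..x₂, ((t : ℂ) + y * I - c)⁻¹
      = log (x₂ + y * I - c) - log (x₁ + y * I - c) := by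
  have him : ∀ t : ℝ, ((t : ℂ) + y * I - c).im = y - c.im := by intro t; simp
  have hm : ∀ t : ℝ, ((t : ℂ) + y * I - c) ∈ slitPlane := by
    intro t; rw [Complex.mem_slitPlane_iff]; right; rw [him t]; exact sub_ne_zero.mpr h
  have hne : ∀ t : ℝ, ((t : ℂ) + y * I - c) ≠ 0 := fun t =>
    Complex.slitPlane_ne_zero (hm t)
  apply intervalIntegral.integral_eq_sub_of_hasDerivAt
  · intro t ht
    have h1 : HasDerivAt (fun z : ℂ => log (z + y * I - c)) (((t : ℂ) + y * I - c)⁻¹) (t : ℂ) := by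
      have hin : HasDerivAt (fun z : ℂ => z + y * I - c) 1 (t : ℂ) :=
        ((hasDerivAt_id _).add_const _).sub_const _
      have := (Complex.hasDerivAt_log (hm t)).comp (t : ℂ) hin
      rw [mul_one] at this
      exact this
    exact h1.comp_ofReal
  · apply ContinuousOn.intervalIntegrable
    apply ContinuousOn.inv₀
    · fun_prop
    · intro t _; exact hne t

lemma integral_inv_vert_right (c : ℂ) {xx : ℝ} (h : c.re < xx) (y₁ y₂ : ℝ) :
    ∫ t : ℝ in y₁..y₂, ((xx : ℂ) + t * I - c)⁻¹
      = -I * (log (xx + y₂ * I - c) - log (xx + y₁ * I - c)) := by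
  have hm : ∀ t : ℝ, ((xx : ℂ) + t * I - c) ∈ slitPlane := by
    intro t; rw [Complex.mem_slitPlane_iff]; left; simpa using sub_pos.mpr h
  have hne : ∀ t : ℝ, ((xx : ℂ) + t * I - c) ≠ 0 := fun t => Complex.slitPlane_ne_zero (hm t)
  rw [show -I * (log (xx + y₂ * I - c) - log (xx + y₁ * I - c))
      = (-I * log (xx + y₂ * I - c)) - (-I * log (xx + y₁ * I - c)) by ring]
  apply intervalIntegral.integral_eq_sub_of_hasDerivAt
  · intro t ht
    have h1 : HasDerivAt (fun z : ℂ => -I * log (xx + z * I - c))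
        (((xx : ℂ) + t * I - c)⁻¹) (t : ℂ) := by
      have hin : HasDerivAt (fun z : ℂ => (xx : ℂ) + z * I - c) I (t : ℂ) := by
        simpa using (((hasDerivAt_id ((t:ℝ) : ℂ)).mul_const I).const_add (xx : ℂ)).sub_const c
      have := ((Complex.hasDerivAt_log (hm t)).comp (t : ℂ) hin).const_mul (-I)
      refine this.congr_deriv ?_
      have : (-I) * ((((xx : ℂ) + t * I - c))⁻¹ * I) = (-I * I) * (((xx : ℂ) + t * I - c))⁻¹ := by
        ring
      rw [this]; simp [Complex.I_mul_I]
    exact h1.comp_ofReal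
  · apply ContinuousOn.intervalIntegrable
    apply ContinuousOn.inv₀
    · fun_prop
    · intro t _; exact hne t

lemma integral_inv_vert_left (c : ℂ) {xx : ℝ} (h : xx < c.re) (y₁ y₂ : ℝ) :
    ∫ t : ℝ in y₁..y₂, ((xx : ℂ) + t * I - c)⁻¹
      = -I * (log (c - xx - y₂ * I) - log (c - xx - y₁ * I)) := by
  have hm : ∀ t : ℝ, (c - xx - (t : ℂ) * I) ∈ slitPlane := by
    intro t; rw [Complex.mem_slitPlane_iff]; left; simpa using sub_pos.mpr h
  have hne : ∀ t : ℝ, (c - xx - (t : ℂ) * I) ≠ 0 := fun t => Complex.slitPlane_ne_zero (hm t)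
  rw [show -I * (log (c - xx - y₂ * I) - log (c - xx - y₁ * I))
      = (-I * log (c - xx - y₂ * I)) - (-I * log (c - xx - y₁ * I)) by ring]
  apply intervalIntegral.integral_eq_sub_of_hasDerivAt
  · intro t ht
    have h1 : HasDerivAt (fun z : ℂ => -I * log (c - xx - z * I))
        (((xx : ℂ) + t * I - c)⁻¹) (t : ℂ) := by
      have hin : HasDerivAt (fun z : ℂ => c - (xx : ℂ) - z * I) (-I) (t : ℂ) := by
        simpa using ((hasDerivAt_id ((t:ℝ) : ℂ)).mul_const I).const_sub (c - (xx : ℂ))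
      have := ((Complex.hasDerivAt_log (hm t)).comp (t : ℂ) hin).const_mul (-I)
      refine this.congr_deriv ?_
      have h2 : (-I) * ((c - (xx : ℂ) - t * I)⁻¹ * (-I)) = (-I * -I) * ((c - xx - (t:ℂ) * I))⁻¹ := by
        ring
      rw [h2]
      have h3 : (-I : ℂ) * -I = -1 := by rw [neg_mul_neg, Complex.I_mul_I]
      rw [h3]
      rw [show ((xx:ℂ) + ↑t * I - c) = -(c - ↑xx - ↑t * I) by ring, inv_neg]
      ring
    exact h1.comp_ofReal
  · apply ContinuousOn.intervalIntegrable
    apply ContinuousOn.inv₀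
    · fun_prop
    · intro t _
      rw [show ((xx:ℂ) + ↑t * I - c) = -(c - ↑xx - ↑t * I) by ring]
      exact neg_ne_zero.mpr (hne t)

lemma arg_pos_diag {δ : ℝ} (hδ : 0 < δ) : Complex.arg ((δ:ℂ) + δ * I) = Real.pi / 4 := by
  have h2 : Real.sqrt 2 * Real.sqrt 2 = 2 := Real.mul_self_sqrt (by norm_num)
  have key : (δ:ℂ) + δ * I
      = ((δ * Real.sqrt 2 : ℝ) : ℂ) * (Real.cos (Real.pi/4) + Real.sin (Real.pi/4) * I) := by
    rw [Real.cos_pi_div_four, Real.sin_pi_div_four]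
    apply Complex.ext <;> push_cast <;> simp <;> nlinarith [h2]
  rw [key, Complex.arg_real_mul _ (by positivity), Complex.ofReal_cos, Complex.ofReal_sin,
    Complex.arg_cos_add_sin_mul_I ⟨by linarith [Real.pi_pos], by linarith [Real.pi_pos]⟩]

lemma arg_neg_diag {δ : ℝ} (hδ : 0 < δ) : Complex.arg (-(δ:ℂ) + δ * I) = 3 * Real.pi / 4 := by
  have h2 : Real.sqrt 2 * Real.sqrt 2 = 2 := Real.mul_self_sqrt (by norm_num)
  have key : -(δ:ℂ) + δ * I
      = ((δ * Real.sqrt 2 : ℝ) : ℂ)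
        * (Real.cos (3 * Real.pi/4) + Real.sin (3 * Real.pi/4) * I) := by
    have h3 : 3 * Real.pi / 4 = Real.pi - Real.pi / 4 := by ring
    rw [h3, Real.cos_pi_sub, Real.sin_pi_sub, Real.cos_pi_div_four, Real.sin_pi_div_four]
    apply Complex.ext <;> push_cast <;> simp <;> nlinarith [h2]
  rw [key, Complex.arg_real_mul _ (by positivity), Complex.ofReal_cos, Complex.ofReal_sin,
    Complex.arg_cos_add_sin_mul_I ⟨by linarith [Real.pi_pos], by linarith [Real.pi_pos]⟩]

lemma log_diff_conj {w : ℂ} (hw : w.im ≠ 0) :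
    Complex.log w - Complex.log (starRingEnd ℂ w) = (2 * Complex.arg w : ℝ) * I := by
  rw [Complex.log_conj _ (fun h => hw (Complex.arg_eq_pi_iff.mp h).2), Complex.sub_conj,
    Complex.log_im]

lemma RectInt_inv_square (c : ℂ) {δ : ℝ} (hδ : 0 < δ) :
    RectInt (fun z => (z - c)⁻¹) (c.re - δ) (c.re + δ) (c.im - δ) (c.im + δ)
      = 2 * Real.pi * I := by
  have e1 : ((c.re + δ : ℝ) : ℂ) + ((c.im - δ : ℝ) : ℂ) * I - c = (δ:ℂ) - δ*I := by
    apply Complex.ext <;> simp <;> ring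
  have e2 : ((c.re - δ : ℝ) : ℂ) + ((c.im - δ : ℝ) : ℂ) * I - c = -(δ:ℂ) - δ*I := by
    apply Complex.ext <;> simp <;> ring
  have e3 : ((c.re + δ : ℝ) : ℂ) + ((c.im + δ : ℝ) : ℂ) * I - c = (δ:ℂ) + δ*I := by
    apply Complex.ext <;> simp <;> ring
  have e4 : ((c.re - δ : ℝ) : ℂ) + ((c.im + δ : ℝ) : ℂ) * I - c = -(δ:ℂ) + δ*I := by
    apply Complex.ext <;> simp <;> ring
  have e5 : c - ((c.re - δ : ℝ) : ℂ) - ((c.im + δ : ℝ) : ℂ) * I = (δ:ℂ) - δ*I := by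
    apply Complex.ext <;> simp <;> ring
  have e6 : c - ((c.re - δ : ℝ) : ℂ) - ((c.im - δ : ℝ) : ℂ) * I = (δ:ℂ) + δ*I := by
    apply Complex.ext <;> simp <;> ring
  have hA : Complex.log ((δ:ℂ) + δ*I) - Complex.log ((δ:ℂ) - δ*I) = (Real.pi : ℂ)/2 * I := by
    have hc : (δ:ℂ) - δ*I = starRingEnd ℂ ((δ:ℂ) + δ*I) := by apply Complex.ext <;> simp
    rw [hc, log_diff_conj (by simp [hδ.ne']), arg_pos_diag hδ]; push_cast; ring
  have hC : Complex.log (-(δ:ℂ) + δ*I) - Complex.log (-(δ:ℂ) - δ*I)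
      = 3 * (Real.pi : ℂ)/2 * I := by
    have hc : -(δ:ℂ) - δ*I = starRingEnd ℂ (-(δ:ℂ) + δ*I) := by apply Complex.ext <;> simp
    rw [hc, log_diff_conj (by simp [hδ.ne']), arg_neg_diag hδ]; push_cast; ring
  unfold RectInt
  simp only [smul_eq_mul]
  rw [integral_inv_horiz c (show (c.im - δ : ℝ) ≠ c.im by linarith) (c.re - δ) (c.re + δ),
      integral_inv_horiz c (show (c.im + δ : ℝ) ≠ c.im by linarith) (c.re - δ) (c.re + δ),
      integral_inv_vert_right c (show c.re < c.re + δ by linarith) (c.im - δ) (c.im + δ),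
      integral_inv_vert_left c (show c.re - δ < c.re by linarith) (c.im - δ) (c.im + δ),
      e1, e2, e3, e4, e5, e6]
  have hI : I * I = -1 := Complex.I_mul_I
  linear_combination hA + hC
    - 2*((Complex.log ((δ:ℂ) + δ*I) - Complex.log ((δ:ℂ) - δ*I)))*hI

lemma RectInt_simple_pole {f : ℂ → ℂ} {c r : ℂ} {X₁ X₂ Y₁ Y₂ : ℝ}
    (hx1 : X₁ < c.re) (hx2 : c.re < X₂) (hy1 : Y₁ < c.im) (hy2 : c.im < Y₂)
    (hcont : ContinuousOn f ((Icc X₁ X₂ ×ℂ Icc Y₁ Y₂) \ {c}))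
    (hdiff : ∀ z ∈ (Ioo X₁ X₂ ×ℂ Ioo Y₁ Y₂) \ {c}, DifferentiableAt ℂ f z)
    (hres : Tendsto (fun z => (z - c) * f z) (𝓝[≠] c) (𝓝 r)) :
    RectInt f X₁ X₂ Y₁ Y₂ = 2 * Real.pi * I * r := by
  have hne_im : ∀ (t y : ℝ), y ≠ c.im → ((t:ℂ) + (y:ℂ) * I) ≠ c := by
    intro t y hy h
    exact hy (by simpa using congrArg Complex.im h)
  have hne_re : ∀ (t y : ℝ), t ≠ c.re → ((t:ℂ) + (y:ℂ) * I) ≠ c := by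
    intro t y ht h
    exact ht (by simpa using congrArg Complex.re h)
  have hmem : ∀ (t y : ℝ), t ∈ Icc X₁ X₂ → y ∈ Icc Y₁ Y₂ →
      (((t:ℂ) + (y:ℂ) * I) : ℂ).re ∈ Icc X₁ X₂ ∧ (((t:ℂ) + (y:ℂ) * I) : ℂ).im ∈ Icc Y₁ Y₂ := by
    intro t y ht hy; simpa using ⟨ht, hy⟩
  -- integrability of f on horizontal segments avoiding the pole's height
  have hHorInt : ∀ {p q y : ℝ}, p ∈ Icc X₁ X₂ → q ∈ Icc X₁ X₂ → y ∈ Icc Y₁ Y₂ → y ≠ c.im →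
      IntervalIntegrable (fun t : ℝ => f ((t:ℂ) + (y:ℂ) * I)) volume p q := by
    intro p q y hp hq hy hyne
    apply ContinuousOn.intervalIntegrable
    apply hcont.comp (show ContinuousOn (fun t : ℝ => ((t:ℂ) + (y:ℂ) * I)) (uIcc p q) by fun_prop)
    intro t ht
    have htx : t ∈ Icc X₁ X₂ := uIcc_subset_Icc hp hq ht
    exact ⟨mem_reProdIm.mpr (hmem t y htx hy), by simpa using hne_im t y hyne⟩
  have hVerInt : ∀ {p q xx : ℝ}, p ∈ Icc Y₁ Y₂ → q ∈ Icc Y₁ Y₂ → xx ∈ Icc X₁ X₂ → xx ≠ c.re →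
      IntervalIntegrable (fun t : ℝ => f ((xx:ℂ) + (t:ℂ) * I)) volume p q := by
    intro p q xx hp hq hxx hxne
    apply ContinuousOn.intervalIntegrable
    apply hcont.comp (show ContinuousOn (fun t : ℝ => ((xx:ℂ) + (t:ℂ) * I)) (uIcc p q) by fun_prop)
    intro t ht
    have hty : t ∈ Icc Y₁ Y₂ := uIcc_subset_Icc hp hq ht
    exact ⟨mem_reProdIm.mpr (hmem xx t hxx hty), by simpa using hne_re xx t hxne⟩
  -- vanishing on pole-free subrectangles
  have hzero : ∀ {p q u v : ℝ}, X₁ ≤ p → p ≤ q → q ≤ X₂ → Y₁ ≤ u → u ≤ v → v ≤ Y₂ →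
      c ∉ (Icc p q ×ℂ Icc u v) → RectInt f p q u v = 0 := by
    intro p q u v hp hpq hq hu huv hv hc
    apply RectInt_eq_zero hpq huv {c} (countable_singleton c)
    · apply hcont.mono
      intro z hz
      refine ⟨?_, fun h => hc ((mem_singleton_iff.mp h) ▸ hz)⟩
      rcases mem_reProdIm.mp hz with ⟨h1, h2⟩
      exact mem_reProdIm.mpr ⟨⟨le_trans hp h1.1, le_trans h1.2 hq⟩,
        ⟨le_trans hu h2.1, le_trans h2.2 hv⟩⟩
    · intro z hz
      rcases hz with ⟨hz1, hz2⟩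
      apply hdiff
      rcases mem_reProdIm.mp hz1 with ⟨h1, h2⟩
      exact ⟨mem_reProdIm.mpr ⟨⟨lt_of_le_of_lt hp h1.1, lt_of_lt_of_le h1.2 hq⟩,
        ⟨lt_of_le_of_lt hu h2.1, lt_of_lt_of_le h2.2 hv⟩⟩, hz2⟩
  -- main estimate
  have main : ∀ ε : ℝ, 0 < ε → ‖RectInt f X₁ X₂ Y₁ Y₂ - 2 * Real.pi * I * r‖ ≤ 8 * ε := by
    intro ε hε
    obtain ⟨η, hη, hηs⟩ := Metric.tendsto_nhdsWithin_nhds.mp hres ε hε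
    set δ : ℝ := min (min ((c.re - X₁)/2) ((X₂ - c.re)/2))
        (min (min ((c.im - Y₁)/2) ((Y₂ - c.im)/2)) (η/4)) with hδdef
    have hδ : 0 < δ := by
      apply lt_min (lt_min (by linarith) (by linarith))
      exact lt_min (lt_min (by linarith) (by linarith)) (by linarith)
    have hδ1 : δ ≤ (c.re - X₁)/2 := le_trans (min_le_left _ _) (min_le_left _ _)
    have hδ2 : δ ≤ (X₂ - c.re)/2 := le_trans (min_le_left _ _) (min_le_right _ _)
    have hδ3 : δ ≤ (c.im - Y₁)/2 :=
      le_trans (min_le_right _ _) (le_trans (min_le_left _ _) (min_le_left _ _))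
    have hδ4 : δ ≤ (Y₂ - c.im)/2 :=
      le_trans (min_le_right _ _) (le_trans (min_le_left _ _) (min_le_right _ _))
    have hδ5 : δ ≤ η/4 := le_trans (min_le_right _ _) (min_le_right _ _)
    -- membership facts
    have hXa : X₁ ∈ Icc X₁ X₂ := ⟨le_refl _, by linarith⟩
    have hXb : X₂ ∈ Icc X₁ X₂ := ⟨by linarith, le_refl _⟩
    have hXm1 : c.re - δ ∈ Icc X₁ X₂ := ⟨by linarith, by linarith⟩
    have hXm2 : c.re + δ ∈ Icc X₁ X₂ := ⟨by linarith, by linarith⟩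
    have hYa : Y₁ ∈ Icc Y₁ Y₂ := ⟨le_refl _, by linarith⟩
    have hYb : Y₂ ∈ Icc Y₁ Y₂ := ⟨by linarith, le_refl _⟩
    have hYm1 : c.im - δ ∈ Icc Y₁ Y₂ := ⟨by linarith, by linarith⟩
    have hYm2 : c.im + δ ∈ Icc Y₁ Y₂ := ⟨by linarith, by linarith⟩
    -- step A : reduce to the small square
    have stepA : RectInt f X₁ X₂ Y₁ Y₂
        = RectInt f (c.re - δ) (c.re + δ) (c.im - δ) (c.im + δ) := by
      have s1 : RectInt f X₁ X₂ Y₁ Y₂ = RectInt f X₁ (c.re - δ) Y₁ Y₂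
          + RectInt f (c.re - δ) X₂ Y₁ Y₂ :=
        RectInt_hsplit (hHorInt hXa hXm1 hYa (by linarith)) (hHorInt hXm1 hXb hYa (by linarith))
          (hHorInt hXa hXm1 hYb (by linarith)) (hHorInt hXm1 hXb hYb (by linarith))
      have s2 : RectInt f (c.re - δ) X₂ Y₁ Y₂ = RectInt f (c.re - δ) (c.re + δ) Y₁ Y₂
          + RectInt f (c.re + δ) X₂ Y₁ Y₂ :=
        RectInt_hsplit (hHorInt hXm1 hXm2 hYa (by linarith)) (hHorInt hXm2 hXb hYa (by linarith))
          (hHorInt hXm1 hXm2 hYb (by linarith)) (hHorInt hXm2 hXb hYb (by linarith))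
      have z1 : RectInt f X₁ (c.re - δ) Y₁ Y₂ = 0 := by
        apply hzero (le_refl _) (by linarith) (by linarith) (le_refl _) (by linarith) (le_refl _)
        intro hc
        have := (mem_reProdIm.mp hc).1.2
        simp at this; linarith
      have z2 : RectInt f (c.re + δ) X₂ Y₁ Y₂ = 0 := by
        apply hzero (by linarith) (by linarith) (le_refl _) (le_refl _) (by linarith) (le_refl _)
        intro hc
        have := (mem_reProdIm.mp hc).1.1
        simp at this; linarith
      have s3 : RectInt f (c.re - δ) (c.re + δ) Y₁ Y₂
          = RectInt f (c.re - δ) (c.re + δ) Y₁ (c.im - δ)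
          + RectInt f (c.re - δ) (c.re + δ) (c.im - δ) Y₂ :=
        RectInt_vsplit (hVerInt hYa hYm1 hXm1 (by linarith)) (hVerInt hYm1 hYb hXm1 (by linarith))
          (hVerInt hYa hYm1 hXm2 (by linarith)) (hVerInt hYm1 hYb hXm2 (by linarith))
      have s4 : RectInt f (c.re - δ) (c.re + δ) (c.im - δ) Y₂
          = RectInt f (c.re - δ) (c.re + δ) (c.im - δ) (c.im + δ)
          + RectInt f (c.re - δ) (c.re + δ) (c.im + δ) Y₂ :=
        RectInt_vsplit (hVerInt hYm1 hYm2 hXm1 (by linarith)) (hVerInt hYm2 hYb hXm1 (by linarith))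
          (hVerInt hYm1 hYm2 hXm2 (by linarith)) (hVerInt hYm2 hYb hXm2 (by linarith))
      have z3 : RectInt f (c.re - δ) (c.re + δ) Y₁ (c.im - δ) = 0 := by
        apply hzero (by linarith) (by linarith) (by linarith) (le_refl _) (by linarith) (by linarith)
        intro hc
        have := (mem_reProdIm.mp hc).2.2
        simp at this; linarith
      have z4 : RectInt f (c.re - δ) (c.re + δ) (c.im + δ) Y₂ = 0 := by
        apply hzero (by linarith) (by linarith) (by linarith) (by linarith) (by linarith) (le_refl _)
        intro hc
        have := (mem_reProdIm.mp hc).2.1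
        simp at this; linarith
      rw [s1, s2, z1, z2, s3, s4, z3, z4]; ring
    -- step B : split off the pole term on the small square
    set P : ℂ → ℂ := fun z => r * (z - c)⁻¹ with hP
    have hPH : ∀ {p q y : ℝ}, y ≠ c.im →
        IntervalIntegrable (fun t : ℝ => P ((t:ℂ) + (y:ℂ) * I)) volume p q := by
      intro p q y hy
      apply ContinuousOn.intervalIntegrable
      apply ContinuousOn.mul continuousOn_const
      exact ContinuousOn.inv₀ (by fun_prop) (fun t _ => sub_ne_zero.mpr (hne_im t y hy))
    have hPV : ∀ {p q xx : ℝ}, xx ≠ c.re →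
        IntervalIntegrable (fun t : ℝ => P ((xx:ℂ) + (t:ℂ) * I)) volume p q := by
      intro p q xx hxx
      apply ContinuousOn.intervalIntegrable
      apply ContinuousOn.mul continuousOn_const
      exact ContinuousOn.inv₀ (by fun_prop) (fun t _ => sub_ne_zero.mpr (hne_re xx t hxx))
    have hf1 := hHorInt hXm1 hXm2 hYm1 (ne_of_lt (by linarith))
    have hf2 := hHorInt hXm1 hXm2 hYm2 (ne_of_gt (by linarith))
    have hf3 := hVerInt hYm1 hYm2 hXm2 (ne_of_gt (by linarith))
    have hf4 := hVerInt hYm1 hYm2 hXm1 (ne_of_lt (by linarith))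
    have hp1 : IntervalIntegrable (fun t : ℝ => P ((t:ℂ) + ((c.im - δ : ℝ):ℂ) * I)) volume
        (c.re - δ) (c.re + δ) := hPH (ne_of_lt (by linarith))
    have hp2 : IntervalIntegrable (fun t : ℝ => P ((t:ℂ) + ((c.im + δ : ℝ):ℂ) * I)) volume
        (c.re - δ) (c.re + δ) := hPH (ne_of_gt (by linarith))
    have hp3 : IntervalIntegrable (fun t : ℝ => P (((c.re + δ : ℝ):ℂ) + (t:ℂ) * I)) volume
        (c.im - δ) (c.im + δ) := hPV (ne_of_gt (by linarith))
    have hp4 : IntervalIntegrable (fun t : ℝ => P (((c.re - δ : ℝ):ℂ) + (t:ℂ) * I)) volume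
        (c.im - δ) (c.im + δ) := hPV (ne_of_lt (by linarith))
    have stepB : RectInt f (c.re - δ) (c.re + δ) (c.im - δ) (c.im + δ)
        = RectInt (fun z => f z - P z) (c.re - δ) (c.re + δ) (c.im - δ) (c.im + δ)
          + 2 * Real.pi * I * r := by
      have hfp : (fun z : ℂ => (f z - P z) + P z) = f := by funext z; ring
      have := RectInt_add (f := fun z => f z - P z) (g := P)
        (x₁ := c.re - δ) (x₂ := c.re + δ) (y₁ := c.im - δ) (y₂ := c.im + δ)
        (hf1.sub hp1) (hf2.sub hp2) (hf3.sub hp3) (hf4.sub hp4) hp1 hp2 hp3 hp4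
      rw [hfp] at this
      rw [this, hP, RectInt_const_mul r (fun z => (z - c)⁻¹), RectInt_inv_square c hδ]
      ring
    -- step C : bound the remainder on the small square
    have hbound : ∀ z : ℂ, z ≠ c → δ ≤ ‖z - c‖ → ‖z - c‖ ≤ 2*δ →
        ‖f z - P z‖ ≤ ε/δ := by
      intro z hz h1 h2
      have hzc : z - c ≠ 0 := sub_ne_zero.mpr hz
      have hrw : f z - P z = ((z - c) * f z - r) * (z - c)⁻¹ := by
        rw [hP]; field_simp
      rw [hrw, norm_mul]
      have hdist : dist z c < η := by
        rw [Complex.dist_eq]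
        calc ‖z - c‖ ≤ 2*δ := h2
          _ < η := by linarith
      have hd : ‖(z - c) * f z - r‖ ≤ ε := by
        have := hηs hz hdist
        rw [Complex.dist_eq] at this
        exact le_of_lt this
      have hinv : ‖(z - c)⁻¹‖ ≤ δ⁻¹ := by
        rw [norm_inv]
        exact inv_anti₀ hδ h1
      calc ‖(z - c) * f z - r‖ * ‖(z - c)⁻¹‖ ≤ ε * δ⁻¹ := by
            apply mul_le_mul hd hinv (norm_nonneg _) (le_of_lt hε)
        _ = ε/δ := by rw [div_eq_mul_inv]
    have habs_re : ∀ (t y : ℝ), |t - c.re| ≤ δ → |y - c.im| ≤ δ →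
        ‖((t:ℂ) + (y:ℂ)*I) - c‖ ≤ 2*δ := by
      intro t y ht hy
      have he : ((t:ℂ) + (y:ℂ)*I) - c = ((t - c.re : ℝ):ℂ) + ((y - c.im : ℝ):ℂ)*I := by
        apply Complex.ext <;> simp
      rw [he]
      calc ‖((t - c.re : ℝ):ℂ) + ((y - c.im : ℝ):ℂ)*I‖
          ≤ |(((t - c.re : ℝ):ℂ) + ((y - c.im : ℝ):ℂ)*I).re|
            + |(((t - c.re : ℝ):ℂ) + ((y - c.im : ℝ):ℂ)*I).im| := Complex.norm_le_abs_re_add_abs_im _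
        _ ≤ 2*δ := by simp; linarith
    have hedgeH : ∀ (y : ℝ), |y - c.im| = δ → ∀ t ∈ Set.uIoc (c.re - δ) (c.re + δ),
        ‖f ((t:ℂ) + (y:ℂ)*I) - P ((t:ℂ) + (y:ℂ)*I)‖ ≤ ε/δ := by
      intro y hy t ht
      rw [Set.uIoc_of_le (by linarith : c.re - δ ≤ c.re + δ)] at ht
      have htb : |t - c.re| ≤ δ := abs_le.mpr ⟨by linarith [ht.1], by linarith [ht.2]⟩
      have hyne : y ≠ c.im := by
        intro h; rw [h] at hy; simp at hy; linarith
      apply hbound _ (hne_im t y hyne)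
      · calc δ = |y - c.im| := hy.symm
          _ = |(((t:ℂ) + (y:ℂ)*I) - c).im| := by simp
          _ ≤ ‖((t:ℂ) + (y:ℂ)*I) - c‖ := Complex.abs_im_le_norm _
      · exact habs_re t y htb (le_of_eq hy)
    have hedgeV : ∀ (xx : ℝ), |xx - c.re| = δ → ∀ t ∈ Set.uIoc (c.im - δ) (c.im + δ),
        ‖f ((xx:ℂ) + (t:ℂ)*I) - P ((xx:ℂ) + (t:ℂ)*I)‖ ≤ ε/δ := by
      intro xx hxx t ht
      rw [Set.uIoc_of_le (by linarith : c.im - δ ≤ c.im + δ)] at ht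
      have htb : |t - c.im| ≤ δ := abs_le.mpr ⟨by linarith [ht.1], by linarith [ht.2]⟩
      have hxne : xx ≠ c.re := by
        intro h; rw [h] at hxx; simp at hxx; linarith
      apply hbound _ (hne_re xx t hxne)
      · calc δ = |xx - c.re| := hxx.symm
          _ = |(((xx:ℂ) + (t:ℂ)*I) - c).re| := by simp
          _ ≤ ‖((xx:ℂ) + (t:ℂ)*I) - c‖ := Complex.abs_re_le_norm _
      · exact habs_re xx t (le_of_eq hxx) htb
    have stepC : ‖RectInt (fun z => f z - P z) (c.re - δ) (c.re + δ) (c.im - δ) (c.im + δ)‖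
        ≤ 8 * ε := by
      have h8 : 2 * (ε/δ) * ((c.re + δ) - (c.re - δ)) + 2 * (ε/δ) * ((c.im + δ) - (c.im - δ))
          = 8 * ε := by field_simp; ring
      rw [← h8]
      apply RectInt_norm_le (by linarith) (by linarith)
      · exact hedgeH (c.im - δ) (by rw [_root_.abs_of_nonpos (by linarith)]; ring)
      · exact hedgeH (c.im + δ) (by rw [_root_.abs_of_nonneg (by linarith)]; ring)
      · exact hedgeV (c.re + δ) (by rw [_root_.abs_of_nonneg (by linarith)]; ring)
      · exact hedgeV (c.re - δ) (by rw [_root_.abs_of_nonpos (by linarith)]; ring)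
    rw [stepA, stepB]
    simpa using stepC
  by_contra hne
  have h0 : 0 < ‖RectInt f X₁ X₂ Y₁ Y₂ - 2 * Real.pi * I * r‖ :=
    norm_pos_iff.mpr (sub_ne_zero.mpr hne)
  have := main (‖RectInt f X₁ X₂ Y₁ Y₂ - 2 * Real.pi * I * r‖/16) (by positivity)
  linarith
lemma cosh_eq_zero_iff' {w : ℂ} :
    Complex.cosh w = 0 ↔ ∃ m : ℤ, w = (2 * m + 1) * (Real.pi / 2) * I := by
  constructor
  · intro h
    rw [← Complex.cos_mul_I] at h
    obtain ⟨k, hk⟩ := Complex.cos_eq_zero_iff.mp h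
    refine ⟨-k - 1, ?_⟩
    have h2 : w * I * I = (2 * (k:ℂ) + 1) * (Real.pi:ℂ) / 2 * I := by rw [hk]
    rw [mul_assoc, Complex.I_mul_I, mul_neg_one] at h2
    have h3 : w = -((2 * (k:ℂ) + 1) * (Real.pi:ℂ) / 2 * I) := by linear_combination -h2
    rw [h3]; push_cast; ring
  · rintro ⟨m, rfl⟩
    rw [show ((2 * (m:ℂ) + 1) * ((Real.pi:ℂ) / 2) * I) = ((2 * (m:ℂ) + 1) * (Real.pi:ℂ) / 2) * I
      by ring, Complex.cosh_mul_I]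
    exact Complex.cos_eq_zero_iff.mpr ⟨m, rfl⟩

lemma tanhF_differentiableAt {a x : ℝ} {z : ℂ}
    (h : Complex.cosh ((a : ℂ) * Complex.exp z) ≠ 0) :
    DifferentiableAt ℂ (tanhF a x) z := by
  have he : tanhF a x = fun z => Complex.sinh ((a:ℂ) * Complex.exp z)
      / Complex.cosh ((a:ℂ) * Complex.exp z) * Complex.exp (-I * Complex.exp z * (x:ℂ)) := by
    funext w; rw [tanhF, Complex.tanh_eq_sinh_div_cosh]
  rw [he]
  apply DifferentiableAt.mul
  · exact DifferentiableAt.div (by fun_prop) (by fun_prop) h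
  · fun_prop

lemma cosh_ne_of_im_zero {w : ℂ} (h : w.im = 0) : Complex.cosh w ≠ 0 := by
  have he : w = (w.re : ℂ) := by
    apply Complex.ext
    · rfl
    · simp [h]
  rw [he, ← Complex.ofReal_cosh]
  exact_mod_cast (Real.cosh_pos w.re).ne'

lemma edge_nopole {a : ℝ} (t y : ℝ) (hy : Real.sin y = 0) :
    Complex.cosh ((a : ℂ) * Complex.exp ((t:ℂ) + (y:ℂ) * I)) ≠ 0 := by
  apply cosh_ne_of_im_zero
  simp [Complex.mul_im, Complex.exp_im, Complex.exp_re, hy]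

lemma cosh_ne_on_strip {a : ℝ} (ha : 0 < a) {k : ℕ} {z : ℂ}
    (hlow : (k : ℝ) * Real.pi ≤ a * Real.exp z.re)
    (hhigh : a * Real.exp z.re ≤ ((k : ℝ) + 1) * Real.pi)
    (him0 : 0 ≤ z.im) (him1 : z.im ≤ Real.pi)
    (hz : z ≠ (Real.log ((2 * (k:ℝ) + 1) * Real.pi / (2 * a)) : ℝ) + ((Real.pi / 2 : ℝ) : ℂ) * I) :
    Complex.cosh ((a : ℂ) * Complex.exp z) ≠ 0 := by
  intro h
  obtain ⟨m, hm⟩ := cosh_eq_zero_iff'.mp h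
  have hre : a * (Real.exp z.re * Real.cos z.im) = 0 := by
    have := congrArg Complex.re hm
    simpa [Complex.mul_re, Complex.exp_re, Complex.exp_im] using this
  have him : a * (Real.exp z.re * Real.sin z.im) = (2 * (m:ℝ) + 1) * (Real.pi / 2) := by
    have := congrArg Complex.im hm
    push_cast at this
    simpa [Complex.mul_im, Complex.exp_re, Complex.exp_im] using this
  have hexp : (0:ℝ) < Real.exp z.re := Real.exp_pos _
  have hcos : Real.cos z.im = 0 := by
    rcases mul_eq_zero.mp hre with h' | h'
    · exact absurd h' ha.ne'
    · rcases mul_eq_zero.mp h' with h'' | h''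
      · exact absurd h'' hexp.ne'
      · exact h''
  obtain ⟨j, hj⟩ := Real.cos_eq_zero_iff.mp hcos
  have hpi := Real.pi_pos
  have hj0 : j = 0 := by
    have h1 : (0:ℝ) ≤ (2 * (j:ℝ) + 1) * Real.pi / 2 := hj ▸ him0
    have h2 : (2 * (j:ℝ) + 1) * Real.pi / 2 ≤ Real.pi := hj ▸ him1
    have hj1 : (0 : ℝ) ≤ 2 * (j:ℝ) + 1 := by nlinarith
    have hj2 : 2 * (j:ℝ) + 1 ≤ 2 := by nlinarith
    have hI1 : (0 : ℤ) ≤ 2 * j + 1 := by exact_mod_cast hj1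
    have hI2 : (2 * j + 1 : ℤ) ≤ 2 := by exact_mod_cast hj2
    omega
  have himv : z.im = Real.pi / 2 := by rw [hj, hj0]; push_cast; ring
  have hsin : Real.sin z.im = 1 := by rw [himv]; exact Real.sin_pi_div_two
  rw [hsin, mul_one] at him
  have hmk : m = k := by
    have hb1 : (k:ℝ) * Real.pi ≤ (2 * (m:ℝ) + 1) * (Real.pi / 2) := him ▸ hlow
    have hb2 : (2 * (m:ℝ) + 1) * (Real.pi / 2) ≤ ((k:ℝ) + 1) * Real.pi := him ▸ hhigh
    have hi1 : (2 * (k:ℝ) : ℝ) ≤ 2 * (m:ℝ) + 1 := by nlinarith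
    have hi2 : (2 * (m:ℝ) + 1 : ℝ) ≤ 2 * (k:ℝ) + 2 := by nlinarith
    have hI1 : (2 * (k:ℤ) : ℤ) ≤ 2 * m + 1 := by exact_mod_cast hi1
    have hI2 : (2 * m + 1 : ℤ) ≤ 2 * (k:ℤ) + 2 := by exact_mod_cast hi2
    omega
  apply hz
  apply Complex.ext
  · have hrez : Real.exp z.re = (2 * (k:ℝ) + 1) * Real.pi / (2 * a) := by
      rw [hmk] at him
      field_simp at him ⊢
      push_cast at him ⊢
      linarith
    have : z.re = Real.log (Real.exp z.re) := (Real.log_exp _).symm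
    rw [this, hrez]
    simp
  · simpa using himv

lemma exp_pole (a : ℝ) (ha : 0 < a) (k : ℕ) :
    Complex.exp ((Real.log ((2 * (k:ℝ) + 1) * Real.pi / (2 * a)) : ℝ)
      + ((Real.pi / 2 : ℝ) : ℂ) * I)
      = (((2 * (k:ℝ) + 1) * Real.pi / (2 * a) : ℝ) : ℂ) * I := by
  have hρ : (0:ℝ) < (2 * (k:ℝ) + 1) * Real.pi / (2 * a) := by
    have := Real.pi_pos; positivity
  rw [Complex.exp_add, Complex.exp_mul_I, ← Complex.ofReal_exp, Real.exp_log hρ,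
    ← Complex.ofReal_cos, ← Complex.ofReal_sin, Real.cos_pi_div_two, Real.sin_pi_div_two]
  push_cast; ring

lemma tanhF_residue {a x : ℝ} (ha : 0 < a) (k : ℕ) :
    Filter.Tendsto (fun z => (z - ((Real.log ((2 * (k:ℝ) + 1) * Real.pi / (2 * a)) : ℝ)
        + ((Real.pi / 2 : ℝ) : ℂ) * I)) * tanhF a x z)
      (𝓝[≠] ((Real.log ((2 * (k:ℝ) + 1) * Real.pi / (2 * a)) : ℝ)
        + ((Real.pi / 2 : ℝ) : ℂ) * I))
      (𝓝 ((Real.exp ((2 * (k:ℝ) + 1) * Real.pi * x / (2 * a)) : ℝ) * (-2 * I)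
        / ((Real.pi : ℂ) * (2 * (k:ℂ) + 1)))) := by
  have hpi := Real.pi_pos
  set ρ : ℝ := (2 * (k:ℝ) + 1) * Real.pi / (2 * a) with hρdef
  have hρ : (0:ℝ) < ρ := by positivity
  set c : ℂ := ((Real.log ρ : ℝ) : ℂ) + ((Real.pi / 2 : ℝ) : ℂ) * I with hcdef
  have hec : Complex.exp c = ((ρ : ℝ) : ℂ) * I := exp_pole a ha k
  have hkc : (2 * (k:ℂ) + 1) ≠ 0 := by
    have : ((2 * k + 1 : ℕ) : ℂ) ≠ 0 := Nat.cast_ne_zero.mpr (by omega)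
    push_cast at this; exact this
  have hπc : ((Real.pi : ℝ) : ℂ) ≠ 0 := Complex.ofReal_ne_zero.mpr hpi.ne'
  have hac : ((a : ℝ) : ℂ) ≠ 0 := Complex.ofReal_ne_zero.mpr ha.ne'
  have hρc : ((ρ : ℝ) : ℂ) = (2 * (k:ℂ) + 1) * (Real.pi : ℂ) / (2 * (a : ℂ)) := by
    rw [hρdef]; push_cast; ring
  have hw : (a:ℂ) * Complex.exp c = (((2 * (k:ℝ) + 1) * Real.pi / 2 : ℝ) : ℂ) * I := by
    rw [hec, hρc]; push_cast; field_simp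
  have hcosh : Complex.cosh ((a:ℂ) * Complex.exp c) = 0 := by
    rw [hw]
    apply cosh_eq_zero_iff'.mpr ⟨(k:ℤ), by push_cast; ring⟩
  have hsinh : Complex.sinh ((a:ℂ) * Complex.exp c) ≠ 0 := by
    intro h0
    have h1 := Complex.cosh_sq_sub_sinh_sq ((a:ℂ) * Complex.exp c)
    rw [hcosh, h0] at h1; simp at h1
  have hd : HasDerivAt (fun z => Complex.cosh ((a:ℂ) * Complex.exp z))
      (Complex.sinh ((a:ℂ) * Complex.exp c) * ((a:ℂ) * Complex.exp c)) c := by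
    have hinner : HasDerivAt (fun z : ℂ => (a:ℂ) * Complex.exp z) ((a:ℂ) * Complex.exp c) c :=
      (Complex.hasDerivAt_exp c).const_mul _
    exact (Complex.hasDerivAt_cosh _).comp c hinner
  have hdne : Complex.sinh ((a:ℂ) * Complex.exp c) * ((a:ℂ) * Complex.exp c) ≠ 0 :=
    mul_ne_zero hsinh (mul_ne_zero hac (Complex.exp_ne_zero c))
  have hslope := hasDerivAt_iff_tendsto_slope.mp hd
  have hquot : Filter.Tendsto (fun z => (z - c) / Complex.cosh ((a:ℂ) * Complex.exp z)) (𝓝[≠] c)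
      (𝓝 (Complex.sinh ((a:ℂ) * Complex.exp c) * ((a:ℂ) * Complex.exp c))⁻¹) := by
    apply Filter.Tendsto.congr' _ (hslope.inv₀ hdne)
    filter_upwards [self_mem_nhdsWithin] with z hz
    have hzc : z - c ≠ 0 := sub_ne_zero.mpr hz
    rw [slope_def_field, hcosh, sub_zero, inv_div]
  -- function identity
  have hfun : ∀ z : ℂ, (Complex.sinh ((a:ℂ) * Complex.exp z)
        * Complex.exp (-I * Complex.exp z * (x:ℂ)))
        * ((z - c) / Complex.cosh ((a:ℂ) * Complex.exp z)) = (z - c) * tanhF a x z := by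
    intro z
    rw [tanhF, Complex.tanh_eq_sinh_div_cosh, div_eq_mul_inv, div_eq_mul_inv]
    ring
  have hcont2 : Filter.Tendsto (fun z => Complex.sinh ((a:ℂ) * Complex.exp z)
      * Complex.exp (-I * Complex.exp z * (x:ℂ))) (𝓝[≠] c)
      (𝓝 (Complex.sinh ((a:ℂ) * Complex.exp c) * Complex.exp (-I * Complex.exp c * (x:ℂ)))) := by
    apply Filter.Tendsto.mono_left _ nhdsWithin_le_nhds
    exact (ContinuousAt.tendsto (by fun_prop))
  have hprod := hcont2.mul hquot
  have hEc : Complex.exp (-I * Complex.exp c * (x:ℂ))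
      = ((Real.exp ((2 * (k:ℝ) + 1) * Real.pi * x / (2 * a)) : ℝ) : ℂ) := by
    rw [hec, Complex.ofReal_exp]
    have h1 : (((2 * (k:ℝ) + 1) * Real.pi * x / (2 * a) : ℝ) : ℂ) = ((ρ:ℝ):ℂ) * (x:ℂ) := by
      rw [hρc]; push_cast; ring
    have harg : -I * (((ρ:ℝ):ℂ) * I) * (x:ℂ)
        = (((2 * (k:ℝ) + 1) * Real.pi * x / (2 * a) : ℝ) : ℂ) := by
      rw [h1]
      linear_combination (-((ρ:ℝ):ℂ) * (x:ℂ)) * Complex.I_sq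
    rw [harg]
  have hinv : ((a:ℂ) * Complex.exp c)⁻¹ = -2 * I / ((Real.pi : ℂ) * (2 * (k:ℂ) + 1)) := by
    apply inv_eq_of_mul_eq_one_right
    rw [hec]
    rw [show (a:ℂ) * (((ρ:ℝ):ℂ) * I) * (-2 * I / ((Real.pi : ℂ) * (2 * (k:ℂ) + 1)))
        = ((a:ℂ) * ((ρ:ℝ):ℂ) * 2 / ((Real.pi:ℂ) * (2*(k:ℂ)+1))) * (-(I*I)) by ring,
      Complex.I_mul_I, neg_neg, mul_one, hρc]
    field_simp
  have hval : Complex.sinh ((a:ℂ) * Complex.exp c) * Complex.exp (-I * Complex.exp c * (x:ℂ))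
      * (Complex.sinh ((a:ℂ) * Complex.exp c) * ((a:ℂ) * Complex.exp c))⁻¹
      = ((Real.exp ((2 * (k:ℝ) + 1) * Real.pi * x / (2 * a)) : ℝ) : ℂ) * (-2 * I)
        / ((Real.pi : ℂ) * (2 * (k:ℂ) + 1)) := by
    rw [hEc, mul_inv, hinv]
    rw [show Complex.sinh ((a:ℂ) * Complex.exp c)
          * ((Real.exp ((2 * (k:ℝ) + 1) * Real.pi * x / (2 * a)) : ℝ) : ℂ)
          * ((Complex.sinh ((a:ℂ) * Complex.exp c))⁻¹
            * (-2 * I / ((Real.pi : ℂ) * (2 * (k:ℂ) + 1))))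
        = ((Real.exp ((2 * (k:ℝ) + 1) * Real.pi * x / (2 * a)) : ℝ) : ℂ) * (-2 * I)
          / ((Real.pi : ℂ) * (2 * (k:ℂ) + 1))
          * (Complex.sinh ((a:ℂ) * Complex.exp c) * (Complex.sinh ((a:ℂ) * Complex.exp c))⁻¹)
        by ring, mul_inv_cancel₀ hsinh, mul_one]
  exact hval ▸ (hprod.congr hfun)
lemma tanh_continuousAt {w : ℂ} (h : Complex.cosh w ≠ 0) : ContinuousAt Complex.tanh w := by
  have he : Complex.tanh = fun z => Complex.sinh z / Complex.cosh z :=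
    funext fun z => Complex.tanh_eq_sinh_div_cosh z
  rw [he]
  exact (Complex.continuous_sinh.continuousAt).div (Complex.continuous_cosh.continuousAt) h

lemma tanhKernel_contOn (a x : ℝ) :
    ContinuousOn (fun ω : ℝ => tanhKernel a x ↑ω) {ω : ℝ | ω ≠ 0} := by
  intro ω hω
  apply ContinuousAt.continuousWithinAt
  have hcosh : Complex.cosh ((a:ℂ) * (ω:ℂ)) ≠ 0 := by
    rw [show (a:ℂ) * (ω:ℂ) = ((a * ω : ℝ) : ℂ) by push_cast; ring, ← Complex.ofReal_cosh]
    exact_mod_cast (Real.cosh_pos _).ne'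
  unfold tanhKernel
  apply ContinuousAt.div
  · apply ContinuousAt.mul
    · have hc2 : ContinuousAt (fun ω : ℝ => (a:ℂ) * (ω:ℂ)) ω := by fun_prop
      exact ContinuousAt.comp (g := Complex.tanh) (f := fun ω : ℝ => (a:ℂ) * (ω:ℂ)) (x := ω)
        (tanh_continuousAt hcosh) hc2
    · fun_prop
  · fun_prop
  · exact Complex.ofReal_ne_zero.mpr hω

lemma subst_pos (a x : ℝ) {p q : ℝ} (hp : 0 < p) (hq : 0 < q) :
    ∫ t : ℝ in Real.log p..Real.log q, tanhF a x ((t:ℂ) + ((0:ℝ):ℂ) * I)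
      = ∫ ω : ℝ in p..q, tanhKernel a x ↑ω := by
  have h1 : ∀ t : ℝ, tanhF a x ((t:ℂ) + ((0:ℝ):ℂ) * I)
      = Real.exp t • tanhKernel a x ((Real.exp t : ℝ) : ℂ) := by
    intro t
    have he : ((Real.exp t : ℝ) : ℂ) = Complex.exp ((t:ℂ) + ((0:ℝ):ℂ) * I) := by
      rw [Complex.ofReal_exp]; norm_num
    have hne : ((Real.exp t : ℝ) : ℂ) ≠ 0 := Complex.ofReal_ne_zero.mpr (Real.exp_pos t).ne'
    rw [tanhF, tanhKernel, Complex.real_smul, ← he]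
    field_simp
  rw [intervalIntegral.integral_congr (fun t _ => h1 t)]
  have hs := intervalIntegral.integral_comp_smul_deriv' (f := Real.exp) (f' := Real.exp)
    (g := fun ω : ℝ => tanhKernel a x ((ω : ℝ) : ℂ)) (a := Real.log p) (b := Real.log q)
    (fun t _ => Real.hasDerivAt_exp t) Real.continuous_exp.continuousOn ?_
  · simp only [Function.comp] at hs
    rw [hs, Real.exp_log hp, Real.exp_log hq]
  · apply (tanhKernel_contOn a x).mono
    rintro ω ⟨t, _, rfl⟩
    exact (Real.exp_pos t).ne'

lemma subst_neg (a x : ℝ) {p q : ℝ} (hp : 0 < p) (hq : 0 < q) :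
    ∫ t : ℝ in Real.log p..Real.log q, tanhF a x ((t:ℂ) + ((Real.pi : ℝ):ℂ) * I)
      = ∫ ω : ℝ in (-p)..(-q), tanhKernel a x ↑ω := by
  have h1 : ∀ t : ℝ, tanhF a x ((t:ℂ) + ((Real.pi : ℝ):ℂ) * I)
      = (-Real.exp t) • tanhKernel a x ((-Real.exp t : ℝ) : ℂ) := by
    intro t
    have he : ((-Real.exp t : ℝ) : ℂ) = Complex.exp ((t:ℂ) + ((Real.pi : ℝ):ℂ) * I) := by
      rw [Complex.exp_add, Complex.exp_pi_mul_I, ← Complex.ofReal_exp]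
      push_cast; ring
    have hne : ((-Real.exp t : ℝ) : ℂ) ≠ 0 := by
      rw [Complex.ofReal_ne_zero]
      exact neg_ne_zero.mpr (Real.exp_pos t).ne'
    rw [tanhF, tanhKernel, Complex.real_smul, ← he]
    field_simp
  rw [intervalIntegral.integral_congr (fun t _ => h1 t)]
  have hs := intervalIntegral.integral_comp_smul_deriv' (f := fun t => -Real.exp t)
    (f' := fun t => -Real.exp t)
    (g := fun ω : ℝ => tanhKernel a x ((ω : ℝ) : ℂ)) (a := Real.log p) (b := Real.log q)
    (fun t _ => (Real.hasDerivAt_exp t).neg) (Real.continuous_exp.neg).continuousOn ?_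
  · simp only [Function.comp] at hs
    rw [hs, Real.exp_log hp, Real.exp_log hq]
  · apply (tanhKernel_contOn a x).mono
    rintro ω ⟨t, _, rfl⟩
    exact (neg_ne_zero.mpr (Real.exp_pos t).ne')

lemma subst_arc (a x : ℝ) {s : ℝ} (hs : 0 < s) :
    ∫ θ : ℝ in (0:ℝ)..Real.pi, tanhKernel a x ((s:ℂ) * Complex.exp (I * (θ:ℂ)))
        * (I * (s:ℂ) * Complex.exp (I * (θ:ℂ)))
      = I • ∫ θ : ℝ in (0:ℝ)..Real.pi, tanhF a x (((Real.log s : ℝ):ℂ) + (θ:ℂ) * I) := by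
  rw [smul_eq_mul, ← intervalIntegral.integral_const_mul]
  apply intervalIntegral.integral_congr
  intro θ _
  have hse : (s:ℂ) * Complex.exp (I * (θ:ℂ))
      = Complex.exp (((Real.log s : ℝ):ℂ) + (θ:ℂ) * I) := by
    rw [Complex.exp_add, ← Complex.ofReal_exp, Real.exp_log hs, mul_comm I (θ:ℂ)]
  have hne : (s:ℂ) * Complex.exp (I * (θ:ℂ)) ≠ 0 :=
    mul_ne_zero (Complex.ofReal_ne_zero.mpr hs.ne') (Complex.exp_ne_zero _)
  simp only [tanhF, tanhKernel]
  rw [← hse]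
  field_simp
  ring_nf
  rw [mul_comm, ← mul_assoc, inv_mul_cancel₀ (Complex.ofReal_ne_zero.mpr hs.ne'), one_mul]

lemma tanhF_edge_integrable (a x : ℝ) {y : ℝ} (hy : Real.sin y = 0) (p q : ℝ) :
    IntervalIntegrable (fun t : ℝ => tanhF a x ((t:ℂ) + (y:ℂ) * I)) volume p q := by
  apply ContinuousOn.intervalIntegrable
  intro t _
  apply ContinuousAt.continuousWithinAt
  have h1 : ContinuousAt (tanhF a x) ((t:ℂ) + (y:ℂ) * I) :=
    (tanhF_differentiableAt (edge_nopole (a := a) t y hy)).continuousAt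
  have h2 : ContinuousAt (fun t : ℝ => ((t:ℂ) + (y:ℂ) * I)) t := by fun_prop
  exact ContinuousAt.comp (g := tanhF a x) (f := fun t : ℝ => ((t:ℂ) + (y:ℂ) * I)) h1 h2

lemma res_value (E : ℂ) (k : ℕ) :
    2 * (Real.pi:ℂ) * I * (E * (-2 * I) / ((Real.pi:ℂ) * (2 * (k:ℂ) + 1)))
      = 4 * E / (2 * (k:ℂ) + 1) := by
  have hπ : ((Real.pi:ℝ):ℂ) ≠ 0 := Complex.ofReal_ne_zero.mpr Real.pi_pos.ne'
  have hk : (2 * (k:ℂ) + 1) ≠ 0 := by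
    have h : ((2 * k + 1 : ℕ) : ℂ) ≠ 0 := Nat.cast_ne_zero.mpr (by omega)
    push_cast at h; exact h
  rw [show 2 * (Real.pi:ℂ) * I * (E * (-2 * I) / ((Real.pi:ℂ) * (2 * (k:ℂ) + 1)))
      = (4 * (Real.pi:ℂ) * E / ((Real.pi:ℂ) * (2 * (k:ℂ) + 1))) * (-(I*I)) by ring,
    Complex.I_mul_I, neg_neg, mul_one]
  field_simp

/-- For `a > 0`, real `x < 0`, `n ≥ 1`, `ρₙ = π/((n+2)a)` and `Rₙ = πn/a`, the
closed-contour integral of `g(ω) = tanh(aω)e^{-iωx}/ω` over the boundary of the upper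
half-annulus `{ρₙ ≤ |ω| ≤ Rₙ, Im ω ≥ 0}` equals
`4 ∑_{k=0}^{n-1} e^{(2k+1)πx/(2a)}/(2k+1)`. -/
theorem half_annulus_contour_integral (a x : ℝ) (ha : 0 < a) (hx : x < 0)
    (n : ℕ) (hn : 1 ≤ n) :
    (∫ ω : ℝ in (-(Real.pi * n / a))..(-(Real.pi / ((n + 2) * a))), tanhKernel a x ω) +
      (∫ ω : ℝ in (Real.pi / ((n + 2) * a))..(Real.pi * n / a), tanhKernel a x ω) -
      (∫ θ in (0 : ℝ)..Real.pi,
        tanhKernel a x ((Real.pi / ((n + 2) * a) : ℝ) * Complex.exp (Complex.I * θ)) *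
          (Complex.I * (Real.pi / ((n + 2) * a) : ℝ) * Complex.exp (Complex.I * θ))) +
      (∫ θ in (0 : ℝ)..Real.pi,
        tanhKernel a x ((Real.pi * n / a : ℝ) * Complex.exp (Complex.I * θ)) *
          (Complex.I * (Real.pi * n / a : ℝ) * Complex.exp (Complex.I * θ))) =
      ((4 * ∑ k ∈ Finset.range n,
        Real.exp ((2 * k + 1) * Real.pi * x / (2 * a)) / (2 * k + 1) : ℝ) : ℂ) := by
  have hpi := Real.pi_pos
  have hn1 : (1:ℝ) ≤ (n:ℝ) := by exact_mod_cast hn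
  set ρ : ℝ := Real.pi / (((n:ℝ) + 2) * a) with hρdef
  set R : ℝ := Real.pi * (n:ℝ) / a with hRdef
  have hρpos : 0 < ρ := by rw [hρdef]; positivity
  have hRpos : 0 < R := by rw [hRdef]; positivity
  set T : ℕ → ℝ := fun j => if j = 0 then Real.log ρ else Real.log (Real.pi * j / a) with hTdef
  have hT0 : T 0 = Real.log ρ := by simp [hTdef]
  have hTn : T n = Real.log R := by
    simp only [hTdef]
    rw [if_neg (by omega : n ≠ 0), hRdef]
  have hTjval : ∀ j : ℕ, 1 ≤ j → a * Real.exp (T j) = Real.pi * j := by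
    intro j hj
    have hj1 : (1:ℝ) ≤ (j:ℝ) := by exact_mod_cast hj
    simp only [hTdef]
    rw [if_neg (by omega : j ≠ 0), Real.exp_log (by positivity)]
    field_simp
  set resv : ℕ → ℂ := fun k =>
    ((4 * Real.exp ((2 * (k:ℝ) + 1) * Real.pi * x / (2 * a)) / (2 * (k:ℝ) + 1) : ℝ) : ℂ)
    with hresv
  have strip : ∀ k : ℕ, k < n → RectInt (tanhF a x) (T k) (T (k+1)) 0 Real.pi = resv k := by
    intro k hk
    set ck : ℂ := ((Real.log ((2 * (k:ℝ) + 1) * Real.pi / (2 * a)) : ℝ) : ℂ)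
      + ((Real.pi / 2 : ℝ) : ℂ) * I with hck
    have hckre : ck.re = Real.log ((2 * (k:ℝ) + 1) * Real.pi / (2 * a)) := by
      rw [hck]; simp
    have hckim : ck.im = Real.pi / 2 := by rw [hck]; simp
    have hpole : (0:ℝ) < (2 * (k:ℝ) + 1) * Real.pi / (2 * a) := by positivity
    have hlt1 : T k < ck.re := by
      rw [hckre]
      simp only [hTdef]
      by_cases hk0 : k = 0
      · rw [if_pos hk0, hρdef]
        apply Real.log_lt_log (by positivity)
        rw [hk0]
        push_cast
        rw [div_lt_div_iff₀ (by positivity) (by positivity)]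
        have hπa : 0 < Real.pi * a := mul_pos hpi ha
        nlinarith [mul_le_mul_of_nonneg_left hn1 hπa.le]
      · rw [if_neg hk0]
        have hk1 : (1:ℝ) ≤ (k:ℝ) := by
          have : 1 ≤ k := by omega
          exact_mod_cast this
        apply Real.log_lt_log (by positivity)
        rw [div_lt_div_iff₀ (by positivity) (by positivity)]
        nlinarith
    have hlt2 : ck.re < T (k+1) := by
      rw [hckre]
      simp only [hTdef]
      rw [if_neg (by omega)]
      apply Real.log_lt_log hpole
      rw [div_lt_div_iff₀ (by positivity) (by positivity)]
      push_cast
      nlinarith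
    have hstriplow : ∀ u : ℝ, T k ≤ u → (k:ℝ) * Real.pi ≤ a * Real.exp u := by
      intro u hu
      have h1 : a * Real.exp (T k) ≤ a * Real.exp u :=
        mul_le_mul_of_nonneg_left (Real.exp_le_exp.mpr hu) ha.le
      by_cases hk0 : k = 0
      · subst hk0; simp only [Nat.cast_zero, zero_mul]; positivity
      · have h2 := hTjval k (by omega)
        rw [mul_comm]
        linarith
    have hstriphigh : ∀ u : ℝ, u ≤ T (k+1) → a * Real.exp u ≤ ((k:ℝ) + 1) * Real.pi := by
      intro u hu
      have h1 : a * Real.exp u ≤ a * Real.exp (T (k+1)) :=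
        mul_le_mul_of_nonneg_left (Real.exp_le_exp.mpr hu) ha.le
      have h2 := hTjval (k+1) (by omega)
      push_cast at h2
      rw [mul_comm]
      linarith
    have hnopole : ∀ z : ℂ, z.re ∈ Icc (T k) (T (k+1)) → z.im ∈ Icc 0 Real.pi → z ≠ ck →
        Complex.cosh ((a:ℂ) * Complex.exp z) ≠ 0 := by
      intro z hz1 hz2 hz3
      exact cosh_ne_on_strip ha (hstriplow _ hz1.1) (hstriphigh _ hz1.2) hz2.1 hz2.2
        (hck ▸ hz3)
    have hres2 := tanhF_residue (a := a) (x := x) ha k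
    have hfinal := RectInt_simple_pole (f := tanhF a x) (c := ck)
      (r := ((Real.exp ((2 * (k:ℝ) + 1) * Real.pi * x / (2 * a)) : ℝ) : ℂ) * (-2 * I)
        / ((Real.pi : ℂ) * (2 * (k:ℂ) + 1)))
      (X₁ := T k) (X₂ := T (k+1)) (Y₁ := 0) (Y₂ := Real.pi)
      hlt1 hlt2 (by rw [hckim]; positivity) (by rw [hckim]; linarith)
      ?_ ?_ ?_
    · rw [hfinal, res_value]
      simp only [hresv]
      push_cast
      ring
    · intro z hz
      obtain ⟨hz1, hz2⟩ := hz
      rcases mem_reProdIm.mp hz1 with ⟨hre, him⟩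
      exact ((tanhF_differentiableAt
        (hnopole z hre him (by simpa using hz2))).continuousAt).continuousWithinAt
    · intro z hz
      obtain ⟨hz1, hz2⟩ := hz
      rcases mem_reProdIm.mp hz1 with ⟨hre, him⟩
      exact tanhF_differentiableAt
        (hnopole z (Ioo_subset_Icc_self hre) (Ioo_subset_Icc_self him) (by simpa using hz2))
    · exact hres2
  have hEdge0 : ∀ p q : ℝ, IntervalIntegrable
      (fun t : ℝ => tanhF a x ((t:ℂ) + ((0:ℝ):ℂ) * I)) volume p q :=
    fun p q => tanhF_edge_integrable a x (by simp) p q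
  have hEdgeπ : ∀ p q : ℝ, IntervalIntegrable
      (fun t : ℝ => tanhF a x ((t:ℂ) + ((Real.pi:ℝ):ℂ) * I)) volume p q :=
    fun p q => tanhF_edge_integrable a x Real.sin_pi p q
  have ind : ∀ m : ℕ, m ≤ n → RectInt (tanhF a x) (T 0) (T m) 0 Real.pi
      = ∑ k ∈ Finset.range m, resv k := by
    intro m
    induction m with
    | zero => intro _; simp [RectInt]
    | succ m ih =>
      intro hm
      rw [RectInt_hsplit (xm := T m) (hEdge0 _ _) (hEdge0 _ _) (hEdgeπ _ _) (hEdgeπ _ _),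
        ih (by omega), strip m (by omega), Finset.sum_range_succ]
  have hbot := subst_pos a x hρpos hRpos
  have htop := subst_neg a x hρpos hRpos
  have harc1 := subst_arc a x hρpos
  have harc2 := subst_arc a x hRpos
  have hsum : RectInt (tanhF a x) (Real.log ρ) (Real.log R) 0 Real.pi
      = ∑ k ∈ Finset.range n, resv k := by
    rw [← hT0, ← hTn]; exact ind n le_rfl
  rw [intervalIntegral.integral_symm (-ρ) (-R), ← hbot, ← htop, harc1, harc2]
  rw [show (-(∫ t : ℝ in Real.log ρ..Real.log R, tanhF a x ((t:ℂ) + ((Real.pi:ℝ):ℂ) * I)))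
        + (∫ t : ℝ in Real.log ρ..Real.log R, tanhF a x ((t:ℂ) + ((0:ℝ):ℂ) * I))
        - (I • ∫ θ : ℝ in (0:ℝ)..Real.pi, tanhF a x (((Real.log ρ : ℝ):ℂ) + (θ:ℂ) * I))
        + (I • ∫ θ : ℝ in (0:ℝ)..Real.pi, tanhF a x (((Real.log R : ℝ):ℂ) + (θ:ℂ) * I))
      = RectInt (tanhF a x) (Real.log ρ) (Real.log R) 0 Real.pi by
    unfold RectInt; simp only [smul_eq_mul]; ring]
  rw [hsum]
  simp only [hresv]
  push_cast
  rw [Finset.mul_sum]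
  apply Finset.sum_congr rfl
  intro k _
  push_cast
  ring
end

section
/- Let c > 0. Then the function x \mapsto artanh(e^{-c|x|}) is Lebesgue integrable on \mathbb{R}, and \int_{-\infty}^{\infty} artanh(e^{-c|x|}) \, dx = \pi^2/(4c). -/
open MeasureTheory

/-- The real inverse hyperbolic tangent: `artanh z = (1/2) log((1+z)/(1-z))`. -/
noncomputable def artanh (z : ℝ) : ℝ := (1 / 2) * Real.log ((1 + z) / (1 - z))

section Helpers
open Real hiding artanh
open Set

lemma expabs_integrable (a : ℝ) (ha : 0 < a) :
    Integrable (fun x : ℝ => Real.exp (-(a * |x|))) := by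
  have hIoi : IntegrableOn (fun x : ℝ => Real.exp (-(a * |x|))) (Ioi 0) := by
    refine (exp_neg_integrableOn_Ioi 0 ha).congr_fun (fun x hx => ?_) measurableSet_Ioi
    rw [abs_of_pos hx]; ring_nf
  have hIic : IntegrableOn (fun x : ℝ => Real.exp (-(a * |x|))) (Iic 0) := by
    rw [← Measure.map_neg_eq_self (volume : Measure ℝ)]
    have m : MeasurableEmbedding fun x : ℝ => -x :=
      (Homeomorph.neg ℝ).measurableEmbedding
    rw [m.integrableOn_map_iff]
    simp_rw [Function.comp_def, abs_neg, neg_preimage, neg_Iic, neg_zero]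
    exact (integrableOn_Ici_iff_integrableOn_Ioi).mpr hIoi
  have := hIic.union hIoi
  rwa [Iic_union_Ioi, integrableOn_univ] at this

lemma expabs_integral (a : ℝ) (ha : 0 < a) :
    ∫ x : ℝ, Real.exp (-(a * |x|)) = 2 / a := by
  have h1 : ∫ x : ℝ, Real.exp (-(a * |x|)) =
      2 * ∫ x in Ioi (0:ℝ), Real.exp (-(a * x)) :=
    integral_comp_abs (f := fun t => Real.exp (-(a * t)))
  have h2 : ∫ x in Ioi (0:ℝ), Real.exp (-(a * x)) = a⁻¹ * 1 := by
    have := integral_comp_mul_left_Ioi (fun u => Real.exp (-u)) 0 ha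
    simp only [mul_zero, smul_eq_mul] at this
    rw [this, integral_exp_neg_Ioi_zero]
  rw [h1, h2]; field_simp

lemma hasSum_odd_sq : HasSum (fun n : ℕ => 1 / (2 * (n:ℝ) + 1) ^ 2) (Real.pi ^ 2 / 8) := by
  have hS : HasSum (fun n : ℕ => 1 / (n:ℝ) ^ 2) (Real.pi ^ 2 / 6) := hasSum_zeta_two
  have heven : HasSum (fun k : ℕ => 1 / ((2 * k : ℕ) : ℝ) ^ 2) (Real.pi ^ 2 / 24) := by
    have h := hS.mul_left (1 / 4)
    have hfe : (fun k : ℕ => 1 / ((2 * k : ℕ) : ℝ) ^ 2)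
        = fun k : ℕ => 1 / 4 * (1 / (k : ℝ) ^ 2) := by
      funext k; push_cast; ring
    rw [hfe, show Real.pi ^ 2 / 24 = 1 / 4 * (Real.pi ^ 2 / 6) by ring]
    exact h
  have hodd_summable : Summable fun k : ℕ => 1 / ((2 * k + 1 : ℕ) : ℝ) ^ 2 :=
    hS.summable.comp_injective (fun a b hab => by omega)
  have hodd := hodd_summable.hasSum
  have htot : HasSum (fun n : ℕ => 1 / (n : ℝ) ^ 2)
      (Real.pi ^ 2 / 24 + ∑' k : ℕ, 1 / ((2 * k + 1 : ℕ) : ℝ) ^ 2) :=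
    HasSum.even_add_odd heven hodd
  have huniq := htot.unique hS
  have hval : (∑' k : ℕ, 1 / ((2 * k + 1 : ℕ) : ℝ) ^ 2) = Real.pi ^ 2 / 8 := by linarith
  rw [hval] at hodd
  exact hodd.congr_fun fun k => by push_cast; ring

lemma hasSum_artanh {z : ℝ} (h0 : 0 ≤ z) (h1 : z < 1) :
    HasSum (fun n : ℕ => z ^ (2 * n + 1) / (2 * (n:ℝ) + 1)) (artanh z) := by
  have habs : |z| < 1 := abs_lt.mpr ⟨lt_of_lt_of_le (by norm_num) h0, h1⟩
  have h := (Real.hasSum_log_sub_log_of_abs_lt_one habs).mul_left (1 / 2)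
  have heq : artanh z = 1 / 2 * (Real.log (1 + z) - Real.log (1 - z)) := by
    rw [artanh, Real.log_div (by linarith) (by linarith)]
  rw [heq]
  refine HasSum.congr_fun h fun k => ?_
  field_simp


noncomputable def Fker (c : ℝ) (n : ℕ) (x : ℝ) : ℝ :=
  Real.exp (-((2 * (n:ℝ) + 1) * c * |x|)) / (2 * (n:ℝ) + 1)

lemma Fker_nonneg (c : ℝ) (n : ℕ) (x : ℝ) : 0 ≤ Fker c n x :=
  div_nonneg (Real.exp_pos _).le (by positivity)

lemma Fker_integrable {c : ℝ} (hc : 0 < c) (n : ℕ) : Integrable (Fker c n) :=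
  (expabs_integrable _ (mul_pos (by positivity) hc)).div_const _

lemma Fker_integral {c : ℝ} (hc : 0 < c) (n : ℕ) :
    ∫ x, Fker c n x = 2 / c * (1 / (2 * (n:ℝ) + 1) ^ 2) := by
  have hn1 : (0:ℝ) < 2 * (n:ℝ) + 1 := by positivity
  unfold Fker
  rw [integral_div, expabs_integral _ (mul_pos hn1 hc)]
  field_simp

lemma Fker_hasSum {c : ℝ} (hc : 0 < c) {x : ℝ} (hx : x ≠ 0) :
    HasSum (fun n => Fker c n x) (artanh (Real.exp (-c * |x|))) := by
  have hxa : 0 < |x| := abs_pos.mpr hx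
  have h1 : Real.exp (-c * |x|) < 1 := by
    rw [Real.exp_lt_one_iff]
    nlinarith
  refine (hasSum_artanh (Real.exp_pos _).le h1).congr_fun fun n => ?_
  unfold Fker
  rw [← Real.exp_nat_mul]
  congr 1
  push_cast
  ring

lemma artanh_exp_nonneg {c : ℝ} (hc : 0 < c) (x : ℝ) :
    0 ≤ artanh (Real.exp (-c * |x|)) := by
  have hz0 : 0 < Real.exp (-c * |x|) := Real.exp_pos _
  have hz1 : Real.exp (-c * |x|) ≤ 1 := by
    apply Real.exp_le_one_iff.mpr
    nlinarith [abs_nonneg x]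
  rcases eq_or_lt_of_le hz1 with h | h
  · rw [artanh, h]
    norm_num
  · apply mul_nonneg (by norm_num)
    apply Real.log_nonneg
    rw [le_div_iff₀ (by linarith)]
    linarith

end Helpers

open Real hiding artanh in
open Set in
/-- For `c > 0`, the function `x ↦ artanh(e^{-c|x|})` is Lebesgue integrable on `ℝ`
and `∫_{-∞}^{∞} artanh(e^{-c|x|}) dx = π²/(4c)`. -/
theorem integral_artanh_kernel (c : ℝ) (hc : 0 < c) :
    Integrable (fun x : ℝ => artanh (Real.exp (-c * |x|))) ∧
    ∫ x : ℝ, artanh (Real.exp (-c * |x|)) = Real.pi ^ 2 / (4 * c) := by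
  have hFint : ∀ n, Integrable (Fker c n) := Fker_integrable hc
  have hHasSumInt : HasSum (fun n => ∫ x, Fker c n x) (Real.pi ^ 2 / (4 * c)) := by
    have h := hasSum_odd_sq.mul_left (2 / c)
    rw [show 2 / c * (Real.pi ^ 2 / 8) = Real.pi ^ 2 / (4 * c) by
      field_simp; ring] at h
    exact h.congr_fun fun n => Fker_integral hc n
  have hsumnorm : Summable fun n => ∫ x, ‖Fker c n x‖ := by
    have he : (fun n => ∫ x, ‖Fker c n x‖) = fun n => ∫ x, Fker c n x := by
      funext n; congr 1; funext x; exact Real.norm_of_nonneg (Fker_nonneg c n x)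
    rw [he]; exact hHasSumInt.summable
  have h0 : ∀ᵐ x : ℝ ∂volume, x ≠ 0 := by
    have hset : {x : ℝ | ¬ x ≠ 0} = {0} := by ext x; simp
    rw [ae_iff, hset]
    exact measure_singleton 0
  have hae : (fun x : ℝ => artanh (Real.exp (-c * |x|))) =ᵐ[volume]
      (fun x => ∑' n, Fker c n x) := by
    filter_upwards [h0] with x hx
    exact (Fker_hasSum hc hx).tsum_eq.symm
  have hmeas : Measurable (fun x : ℝ => artanh (Real.exp (-c * |x|))) := by
    have hebase : Measurable fun x : ℝ => Real.exp (-c * |x|) := by fun_prop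
    exact measurable_const.mul (Real.measurable_log.comp
      ((measurable_const.add hebase).div (measurable_const.sub hebase)))
  have hfin : HasFiniteIntegral (fun x : ℝ => artanh (Real.exp (-c * |x|))) := by
    rw [hasFiniteIntegral_iff_ofReal (ae_of_all _ (artanh_exp_nonneg hc))]
    have hle : ∫⁻ x, ENNReal.ofReal (artanh (Real.exp (-c * |x|)))
        = ∑' n, ∫⁻ x, ENNReal.ofReal (Fker c n x) := by
      have hFm : ∀ n : ℕ, AEMeasurable (fun x : ℝ => ENNReal.ofReal (Fker c n x)) volume :=
        fun n => ENNReal.measurable_ofReal.comp_aemeasurable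
          (hFint n).aestronglyMeasurable.aemeasurable
      rw [← lintegral_tsum hFm]
      apply lintegral_congr_ae
      filter_upwards [h0] with x hx
      rw [← (Fker_hasSum hc hx).tsum_eq,
        ENNReal.ofReal_tsum_of_nonneg (fun n => Fker_nonneg c n x)
          (Fker_hasSum hc hx).summable]
    rw [hle, tsum_congr (fun n =>
      (ofReal_integral_eq_lintegral_ofReal (hFint n)
        (ae_of_all _ (Fker_nonneg c n))).symm)]
    rw [← ENNReal.ofReal_tsum_of_nonneg
      (fun n => integral_nonneg (Fker_nonneg c n)) hHasSumInt.summable]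
    exact ENNReal.ofReal_lt_top
  refine ⟨⟨hmeas.aestronglyMeasurable, hfin⟩, ?_⟩
  rw [integral_congr_ae hae,
    ← integral_tsum_of_summable_integral_norm hFint hsumnorm]
  exact hHasSumInt.tsum_eq
end
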